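/- arXiv:1308.5849 — 10 statements merged into one kernel-verified Lean document; each statement's English description precedes it below -/
import Mathlib

section
/- Let k, l, m be natural numbers and let H₁, H₂, …, H_m be m pairwise distinct sets. If m > (k+l choose l), then at least one of the following holds: (i) among the H_i's one can find a (k+1)-increasing sequence of k+2 of the sets, i.e. indices i₁,…,i_{k+2} with H_{i₁} ⊊ H_{i₁}∪H_{i₂} ⊊ … ⊊ H_{i₁}∪…∪H_{i_{k+2}}; or (ii) among the H_i's one can find an (l+1)-decreasing sequence of l+2 of the sets, i.e. indices i₁,…,i_{l+2} with H_{i₁} ⊋ H_{i₁}∩H_{i₂} ⊋ … ⊋ H_{i₁}∩…∩H_{i_{l+2}}. -/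
/-!
Induct on `k` and `l`. Unless all the sets are equal, pick `x ∈ H a \ H b`. An increasing chain
among the sets missing `x` can be prolonged by `H a`, which adds `x` to the union, and a
decreasing chain among the sets containing `x` can be prolonged by `H b`, which removes `x` from
the intersection. Hence at most `(k + l - 1).choose l` of the sets miss `x` and at most
`(k + l - 1).choose (l - 1)` contain it, and Pascal's rule adds these up. Decreasing chains are
increasing chains of the complements, so only increasing chains need to be handled.
-/

open Finset Function

section Chains

variable {α ι : Type*}

def IsIncChain (H : ι → Set α) (i : ℕ → ι) (n : ℕ) : Prop :=
  ∀ t < n, (⋃ s ∈ Finset.range (t + 1), H (i s)) ⊂ ⋃ s ∈ Finset.range (t + 2), H (i s)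

def IsDecChain (H : ι → Set α) (i : ℕ → ι) (n : ℕ) : Prop :=
  ∀ t < n, (⋂ s ∈ Finset.range (t + 2), H (i s)) ⊂ ⋂ s ∈ Finset.range (t + 1), H (i s)

def HasIncChain (H : ι → Set α) (F : Finset ι) (n : ℕ) : Prop :=
  ∃ i : ℕ → ι, (∀ s, i s ∈ F) ∧ IsIncChain H i n

variable {H : ι → Set α} {i : ℕ → ι} {n : ℕ} {F G : Finset ι} {a b : ι} {x : α}

theorem isDecChain_iff_isIncChain_compl : IsDecChain H i n ↔ IsIncChain (compl ∘ H) i n := by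
  simp only [IsDecChain, IsIncChain, comp_apply, ← Set.compl_iInter₂, compl_lt_compl_iff_lt]

theorem IsIncChain.update [DecidableEq ι] (hi : IsIncChain H i n) (hx : ∀ s ≤ n, x ∉ H (i s))
    (hxa : x ∈ H a) : IsIncChain H (Function.update i (n + 1) a) (n + 1) := by
  have hinit : ∀ t ≤ n, (⋃ s ∈ Finset.range (t + 1), H (Function.update i (n + 1) a s)) =
      ⋃ s ∈ Finset.range (t + 1), H (i s) := fun t ht =>
    Set.iUnion₂_congr fun s hs => by rw [update_of_ne (by grind)]
  intro t ht
  rw [hinit t (by omega)]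
  rcases Nat.lt_succ_iff_lt_or_eq.1 ht with ht | rfl
  · rw [hinit (t + 1) ht]
    exact hi t ht
  · have hxU : x ∉ ⋃ s ∈ Finset.range (t + 1), H (i s) := by
      simpa [Nat.lt_succ_iff] using hx
    rw [range_add_one (n := t + 1), set_biUnion_insert, update_self, hinit t le_rfl]
    exact ⟨Set.subset_union_right, fun h => hxU (h (Or.inl hxa))⟩

theorem HasIncChain.mono (hGF : G ⊆ F) (hG : HasIncChain H G n) : HasIncChain H F n :=
  let ⟨i, hiG, hi⟩ := hG
  ⟨i, fun s => hGF (hiG s), hi⟩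

theorem hasIncChain_zero (ha : a ∈ F) : HasIncChain H F 0 :=
  ⟨fun _ => a, fun _ => ha, fun t ht => (Nat.not_lt_zero t ht).elim⟩

theorem HasIncChain.extend (hG : HasIncChain H G n) (hGF : G ⊆ F) (hx : ∀ c ∈ G, x ∉ H c)
    (ha : a ∈ F) (hxa : x ∈ H a) : HasIncChain H F (n + 1) := by
  classical
  obtain ⟨i, hiG, hi⟩ := hG
  exact ⟨Function.update i (n + 1) a,
    (forall_update_iff i fun _ c => c ∈ F).2 ⟨ha, fun s _ => hGF (hiG s)⟩,
    hi.update (fun s _ => hx _ (hiG s)) hxa⟩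

theorem subset_of_not_hasIncChain_one (h : ¬HasIncChain H F 1) (ha : a ∈ F) (hb : b ∈ F) :
    H a ⊆ H b := by
  by_contra hab
  obtain ⟨x, hxa, hxb⟩ := Set.not_subset.1 hab
  exact h ((hasIncChain_zero (mem_singleton_self b)).extend (singleton_subset_iff.2 hb)
    (by simpa using hxb) ha hxa)

theorem card_le_one_of_forall_subset (hH : Set.InjOn H F) (h : ∀ a ∈ F, ∀ b ∈ F, H a ⊆ H b) :
    #F ≤ 1 :=
  card_le_one.2 fun a ha b hb => hH ha hb ((h a ha b hb).antisymm (h b hb a ha))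

theorem card_le_one_of_not_hasIncChain_one (hH : Set.InjOn H F) (h : ¬HasIncChain H F 1) :
    #F ≤ 1 :=
  card_le_one_of_forall_subset hH fun _ ha _ hb => subset_of_not_hasIncChain_one h ha hb

theorem card_le_choose_of_not_hasIncChain {k l : ℕ} (hH : Set.InjOn H F)
    (hinc : ¬HasIncChain H F (k + 1)) (hdec : ¬HasIncChain (compl ∘ H) F (l + 1)) :
    #F ≤ (k + l).choose l := by
  classical
  induction k generalizing l F with
  | zero => simpa using card_le_one_of_not_hasIncChain_one hH hinc
  | succ k ihk =>
    induction l generalizing F with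
    | zero => simpa using card_le_one_of_not_hasIncChain_one (compl_injective.comp_injOn hH) hdec
    | succ l ihl =>
      by_cases hsub : ∀ a ∈ F, ∀ b ∈ F, H a ⊆ H b
      · exact (card_le_one_of_forall_subset hH hsub).trans (Nat.choose_pos (by omega))
      push Not at hsub
      obtain ⟨a, ha, b, hb, hab⟩ := hsub
      obtain ⟨x, hxa, hxb⟩ := Set.not_subset.1 hab
      have hin : #(F.filter (x ∈ H ·)) ≤ (k + 1 + l).choose l :=
        ihl (hH.mono (coe_subset.2 (filter_subset _ _)))
          (fun h => hinc (h.mono (filter_subset _ _)))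
          (fun h => hdec (h.extend (filter_subset _ _) (by simp) hb hxb))
      have hout : #(F.filter (x ∉ H ·)) ≤ (k + (l + 1)).choose (l + 1) :=
        ihk (hH.mono (coe_subset.2 (filter_subset _ _)))
          (fun h => hinc (h.extend (filter_subset _ _) (by simp) ha hxa))
          (fun h => hdec (h.mono (filter_subset _ _)))
      calc #F = #(F.filter (x ∈ H ·)) + #(F.filter (x ∉ H ·)) :=
            (card_filter_add_card_filter_not _).symm
        _ ≤ (k + 1 + l).choose l + (k + (l + 1)).choose (l + 1) := add_le_add hin hout
        _ = (k + 1 + (l + 1)).choose (l + 1) := by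
          rw [show k + (l + 1) = k + 1 + l by omega, ← Nat.choose_succ_succ']
          rfl

end Chains

/-- **Lemma 1.** In any collection of more than `(k+l).choose l` pairwise distinct
sets one finds a `(k+1)`-increasing sequence of `k+2` sets or an `(l+1)`-decreasing
sequence of `l+2` sets. -/
theorem increasing_or_decreasing_sequence {α : Type*} (k l m : ℕ) (H : Fin m → Set α)
    (hdist : Function.Injective H) (hm : m > (k + l).choose l) :
    (∃ i : ℕ → Fin m, ∀ t < k + 1,
      (⋃ s ∈ Finset.range (t + 1), H (i s)) ⊂ ⋃ s ∈ Finset.range (t + 2), H (i s)) ∨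
    (∃ i : ℕ → Fin m, ∀ t < l + 1,
      (⋂ s ∈ Finset.range (t + 2), H (i s)) ⊂ ⋂ s ∈ Finset.range (t + 1), H (i s)) := by
  by_contra h
  rw [not_or] at h
  have hcard := card_le_choose_of_not_hasIncChain (F := univ) hdist.injOn
    (fun ⟨i, _, hi⟩ => h.1 ⟨i, hi⟩)
    (fun ⟨i, _, hi⟩ => h.2 ⟨i, isDecChain_iff_isIncChain_compl.2 hi⟩)
  rw [card_univ, Fintype.card_fin] at hcard
  omega
end

section
/- Let 𝓗 = {H₁, H₂, …} be a countably infinite collection of pairwise distinct sets. Then at least one of the following holds: (i) among the H_i's one can find an infinite increasing sequence (H_{i₁}, H_{i₂}, …), i.e. H_{i₁} ⊊ H_{i₁}∪H_{i₂} ⊊ H_{i₁}∪H_{i₂}∪H_{i₃} ⊊ …; or (ii) among the H_i's one can find an infinite decreasing sequence (H_{i₁}, H_{i₂}, …), i.e. H_{i₁} ⊋ H_{i₁}∩H_{i₂} ⊋ H_{i₁}∩H_{i₂}∩H_{i₃} ⊋ …, where the indices i₁, i₂, … are pairwise distinct. -/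
/-!
If the family has no increasing sequence, every subfamily `(H j)_{j ∈ J}` is covered by finitely
many of its members: otherwise one greedily picks sets not covered by the previous ones. Now call
a set `T` *rich* if the traces `H j ∩ T` are infinitely many; `univ` is rich since the `H j` are
distinct. Given a rich `T`, cover the sets not containing `T` by finitely many `H g` with
`T ⊄ H g`. A trace `H j ∩ T ≠ T` is then the union of the traces `H j ∩ (T ∩ H g)`, so if every
`T ∩ H g` had finitely many traces, so would `T`. Hence some proper subset `T ∩ H g` of `T` is
again rich, and iterating gives the decreasing sequence.
-/

open Set Function

section IncreasingOrDecreasing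

variable {α ι : Type*} {H : ι → Set α}

theorem injective_and_biUnion_ssubset_of_not_subset_biUnion {i : ℕ → ι}
    (h : ∀ n, ¬ H (i n) ⊆ ⋃ m ∈ Finset.range n, H (i m)) :
    Injective i ∧ ∀ t : ℕ,
      (⋃ s ∈ Finset.range (t + 1), H (i s)) ⊂ ⋃ s ∈ Finset.range (t + 2), H (i s) := by
  have hsub : ∀ m n, m < n → H (i m) ⊆ ⋃ s ∈ Finset.range n, H (i s) := fun m n hmn =>
    subset_biUnion_of_mem (u := fun s => H (i s)) (Finset.mem_range.mpr hmn)
  refine ⟨Injective.of_lt_imp_ne fun m n hmn heq => h n (heq ▸ hsub m n hmn), fun t => ?_⟩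
  refine (biUnion_subset_biUnion_left ?_).ssubset_of_not_subset fun hle =>
    h (t + 1) ((hsub (t + 1) (t + 2) (by omega)).trans hle)
  exact_mod_cast Finset.range_subset_range.mpr (by omega)

theorem injective_and_biInter_ssubset_of_not_biInter_subset {i : ℕ → ι}
    (h : ∀ n, ¬ (⋂ m ∈ Finset.range n, H (i m)) ⊆ H (i n)) :
    Injective i ∧ ∀ t : ℕ,
      (⋂ s ∈ Finset.range (t + 2), H (i s)) ⊂ ⋂ s ∈ Finset.range (t + 1), H (i s) := by
  have hsub : ∀ m n, m < n → (⋂ s ∈ Finset.range n, H (i s)) ⊆ H (i m) := fun m n hmn =>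
    biInter_subset_of_mem (t := fun s => H (i s)) (Finset.mem_range.mpr hmn)
  refine ⟨Injective.of_lt_imp_ne fun m n hmn heq => h n (heq ▸ hsub m n hmn), fun t => ?_⟩
  rw [Finset.range_add_one (n := t + 1), Finset.set_biInter_insert, inter_comm]
  exact inter_ssubset_left_iff.mpr (h (t + 1))

theorem exists_increasing_biUnion_of_no_finite_cover (J : Set ι)
    (h : ∀ F ⊆ J, F.Finite → ∃ j ∈ J, ¬ H j ⊆ ⋃ g ∈ F, H g) :
    ∃ i : ℕ → ι, Injective i ∧ ∀ t : ℕ,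
      (⋃ s ∈ Finset.range (t + 1), H (i s)) ⊂ ⋃ s ∈ Finset.range (t + 2), H (i s) := by
  obtain ⟨i, hi⟩ := seq_of_forall_finite_exists
    (P := fun c t => c ∈ J ∧ ¬ H c ⊆ ⋃ g ∈ t ∩ J, H g)
    fun t ht => h (t ∩ J) inter_subset_right (ht.inter_of_left J)
  refine ⟨i, injective_and_biUnion_ssubset_of_not_subset_biUnion fun n => ?_⟩
  have hJ : i '' Iio n ∩ J = i '' Iio n :=
    inter_eq_left.mpr (image_subset_iff.mpr fun m _ => (hi m).1)
  simpa [hJ, biUnion_image] using (hi n).2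

theorem exists_decreasing_biInter_of_step (P : Set α → Prop) (huniv : P univ)
    (hstep : ∀ T, P T → ∃ g, ¬ T ⊆ H g ∧ P (T ∩ H g)) :
    ∃ i : ℕ → ι, Injective i ∧ ∀ t : ℕ,
      (⋂ s ∈ Finset.range (t + 2), H (i s)) ⊂ ⋂ s ∈ Finset.range (t + 1), H (i s) := by
  obtain ⟨g₀, -⟩ := hstep univ huniv
  obtain ⟨i, hi⟩ := seq_of_forall_finite_exists
    (P := fun c t => P (⋂ g ∈ t, H g) → ¬ (⋂ g ∈ t, H g) ⊆ H c ∧ P ((⋂ g ∈ t, H g) ∩ H c))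
    fun t _ => by
      by_cases ht : P (⋂ g ∈ t, H g)
      · obtain ⟨g, hg⟩ := hstep _ ht
        exact ⟨g, fun _ => hg⟩
      · exact ⟨g₀, fun h => absurd h ht⟩
  have hrange : ∀ n, ⋂ g ∈ i '' Iio n, H g = ⋂ m ∈ Finset.range n, H (i m) := by simp
  have hP : ∀ n, P (⋂ m ∈ Finset.range n, H (i m)) := by
    intro n
    induction n with
    | zero => simpa using huniv
    | succ n ih =>
      rw [Finset.range_add_one, Finset.set_biInter_insert, inter_comm, ← hrange]
      rw [← hrange] at ih
      exact ((hi n) ih).2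
  refine ⟨i, injective_and_biInter_ssubset_of_not_biInter_subset fun n => ?_⟩
  have := ((hi n) (hrange n ▸ hP n)).1
  rwa [hrange] at this

theorem exists_not_subset_infinite_range_inter
    (hcover : ∀ J : Set ι, ∃ F ⊆ J, F.Finite ∧ ∀ j ∈ J, H j ⊆ ⋃ g ∈ F, H g) {T : Set α}
    (hT : (range fun j => H j ∩ T).Infinite) :
    ∃ g, ¬ T ⊆ H g ∧ (range fun j => H j ∩ (T ∩ H g)).Infinite := by
  obtain ⟨F, hFJ, hF, hcov⟩ := hcover {j | ¬ T ⊆ H j}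
  by_contra! hfin
  have := hF.to_subtype
  have hpi : (univ.pi fun g : F => range fun j => H j ∩ (T ∩ H g)).Finite :=
    Finite.pi fun g => hfin g (hFJ g.2)
  refine hT (((hpi.image fun φ => ⋃ g, φ g).insert T).subset ?_)
  rintro _ ⟨j, rfl⟩
  by_cases hj : T ⊆ H j
  · exact Or.inl (inter_eq_right.mpr hj)
  · refine Or.inr ⟨fun g => H j ∩ (T ∩ H g), fun g _ => ⟨j, rfl⟩, ?_⟩
    ext x
    constructor
    · intro hx
      obtain ⟨g, hxj, hxT, -⟩ := mem_iUnion.mp hx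
      exact ⟨hxj, hxT⟩
    · rintro ⟨hxj, hxT⟩
      obtain ⟨g, hgF, hxg⟩ := mem_iUnion₂.mp (hcov j hj hxj)
      exact mem_iUnion.mpr ⟨⟨g, hgF⟩, hxj, hxT, hxg⟩

end IncreasingOrDecreasing

/-- **Lemma 2 (Bauslaugh).** In any countably infinite collection of pairwise distinct
sets one finds an infinite increasing sequence or an infinite decreasing sequence
(with pairwise distinct indices). -/
theorem infinite_increasing_or_decreasing_sequence {α : Type*} (H : ℕ → Set α)
    (hdist : Function.Injective H) :
    (∃ i : ℕ → ℕ, Function.Injective i ∧ ∀ t : ℕ,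
      (⋃ s ∈ Finset.range (t + 1), H (i s)) ⊂ ⋃ s ∈ Finset.range (t + 2), H (i s)) ∨
    (∃ i : ℕ → ℕ, Function.Injective i ∧ ∀ t : ℕ,
      (⋂ s ∈ Finset.range (t + 2), H (i s)) ⊂ ⋂ s ∈ Finset.range (t + 1), H (i s)) := by
  by_cases hcover : ∀ J : Set ℕ, ∃ F ⊆ J, F.Finite ∧ ∀ j ∈ J, H j ⊆ ⋃ g ∈ F, H g
  · refine Or.inr (exists_decreasing_biInter_of_step (fun T => (range fun j => H j ∩ T).Infinite)
      ?_ fun T hT => exists_not_subset_infinite_range_inter hcover hT)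
    simpa using infinite_range_of_injective hdist
  · push Not at hcover
    obtain ⟨J, hJ⟩ := hcover
    exact Or.inl (exists_increasing_biUnion_of_no_finite_cover J hJ)
end

section
/- For all natural numbers k and l, if 𝓗 is a collection of pairwise distinct sets with |𝓗| > (R(k+1)+R(l+1)−2 choose R(k+1)−1), where R denotes the diagonal Ramsey number, then at least one of the following holds: the (k+1)-singleton matrix can be found in 𝓗, or the (l+1)-cosingleton matrix can be found in 𝓗, or the min(k+1, l+1)-monotone matrix can be found in 𝓗. -/
/-- A 0-1 matrix `N` (given as a `Prop`-valued matrix, `N i j` meaning entry 1)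
with rows indexed by `Fin a` and columns by `Fin b` *can be found* in a collection
of sets `𝓗` if there are `a` distinct sets of `𝓗` and `b` distinct elements of
`⋃₀ 𝓗` such that `N` is the incidence matrix of the sets over the elements. -/
def FoundIn {α : Type*} {a b : ℕ} (N : Fin a → Fin b → Prop) (𝓗 : Set (Set α)) : Prop :=
  ∃ (H : Fin a → Set α) (e : Fin b → α),
    Function.Injective H ∧ Function.Injective e ∧
    (∀ i, H i ∈ 𝓗) ∧ (∀ j, e j ∈ ⋃₀ 𝓗) ∧
    (∀ i j, e j ∈ H i ↔ N i j)

/-- The `n`-singleton matrix `Sⁿ`: `n+1` rows, `n` columns, entry 1 iff `i = j+1`. -/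
def singletonMatrix (n : ℕ) : Fin (n + 1) → Fin n → Prop :=
  fun i j => (i : ℕ) = (j : ℕ) + 1

/-- The `n`-cosingleton matrix `S̄ⁿ`: `n+1` rows, `n` columns, entry 0 iff `i = j`. -/
def cosingletonMatrix (n : ℕ) : Fin (n + 1) → Fin n → Prop :=
  fun i j => (i : ℕ) ≠ (j : ℕ)

/-- The `n`-monotone matrix `Mⁿ`: `n+1` rows, `n` columns, entry 1 iff `i ≥ j+1`. -/
def monotoneMatrix (n : ℕ) : Fin (n + 1) → Fin n → Prop :=
  fun i j => (j : ℕ) + 1 ≤ (i : ℕ)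

/-- The diagonal Ramsey number `R(r)`: the least `n` such that every 2-coloring of
the 2-element subsets of an `n`-element set admits a monochromatic subset of size `r`. -/
noncomputable def RamseyNumber (r : ℕ) : ℕ :=
  sInf {n : ℕ | ∀ c : Sym2 (Fin n) → Bool, ∃ (A : Finset (Fin n)) (b : Bool),
    r ≤ A.card ∧ ∀ i ∈ A, ∀ j ∈ A, i ≠ j → c s(i, j) = b}

/-
Pick an element separating two sets of the family and split the family according to membership
of that element. Inductively (Pascal's rule), more than `(u + d).choose u` sets contain either a
chain `H₀, …, H_{u+1}` with elements `e_j ∉ H_j` but `e_j ∈ H_i` for `i > j`, or the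
complementary chain of length `d + 1`. Colouring the pairs `j < j'` of a chain by whether
`e_{j'} ∈ H_j`, Ramsey's theorem finds `r` of any `R(r)` chain positions on which the entries
above the diagonal are constant too. With the last set of the chain as an extra row, the four
possible incidence patterns are, up to reordering rows and columns, the cosingleton, monotone,
singleton and monotone matrices.
-/

open Finset

theorem exists_pairwise_color_of_choose_le {V : Type*} [DecidableEq V] (c : Sym2 V → Bool) :
    ∀ (p q : ℕ) (s : Finset V), (p + q).choose p ≤ #s → ∃ t ⊆ s,
      (p ≤ #t ∧ (t : Set V).Pairwise fun x y => c s(x, y) = false) ∨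
      (q ≤ #t ∧ (t : Set V).Pairwise fun x y => c s(x, y) = true) := by
  intro p
  induction p with
  | zero => exact fun _ s _ => ⟨∅, empty_subset s, .inl ⟨le_rfl, by simp⟩⟩
  | succ p ihp =>
    intro q
    induction q with
    | zero => exact fun s _ => ⟨∅, empty_subset s, .inr ⟨le_rfl, by simp⟩⟩
    | succ q ihq =>
      intro s hs
      have hpascal : (p + 1 + (q + 1)).choose (p + 1) =
          (p + (q + 1)).choose p + (p + 1 + q).choose (p + 1) := by
        rw [show p + 1 + (q + 1) = p + (q + 1) + 1 by omega, Nat.choose_succ_succ',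
          show p + (q + 1) = p + 1 + q by omega]
      obtain ⟨v, hv⟩ : s.Nonempty := card_pos.1 <| by
        have := Nat.choose_pos (show p + 1 ≤ p + 1 + (q + 1) by omega); omega
      set sf := (s.erase v).filter fun y => c s(v, y) = false
      set st := (s.erase v).filter fun y => ¬c s(v, y) = false
      have hsf : sf ⊆ s := (filter_subset _ _).trans (erase_subset v s)
      have hst : st ⊆ s := (filter_subset _ _).trans (erase_subset v s)
      have hsplit : #sf + #st = #s - 1 := by
        rw [card_filter_add_card_filter_not, card_erase_of_mem hv]
      have hextend (b : Bool) (t : Finset V) (hvt : ∀ y ∈ t, c s(v, y) = b)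
          (ht : (t : Set V).Pairwise fun x y => c s(x, y) = b) :
          (insert v t : Set V).Pairwise fun x y => c s(x, y) = b :=
        ht.insert fun y hy _ => ⟨hvt y hy, Sym2.eq_swap ▸ hvt y hy⟩
      by_cases hf : (p + (q + 1)).choose p ≤ #sf
      · obtain ⟨t, hts, ⟨hcard, hpw⟩ | hq⟩ := ihp (q + 1) sf hf
        · have hvt : v ∉ t := fun h => by simpa [sf] using hts h
          refine ⟨insert v t, insert_subset hv (hts.trans hsf),
            .inl ⟨by rw [card_insert_of_notMem hvt]; omega, ?_⟩⟩
          exact_mod_cast hextend false t (fun y hy => (mem_filter.1 (hts hy)).2) hpw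
        · exact ⟨t, hts.trans hsf, .inr hq⟩
      · obtain ⟨t, hts, hp | ⟨hcard, hpw⟩⟩ := ihq st (by omega)
        · exact ⟨t, hts.trans hst, .inl hp⟩
        · have hvt : v ∉ t := fun h => by simpa [st] using hts h
          refine ⟨insert v t, insert_subset hv (hts.trans hst),
            .inr ⟨by rw [card_insert_of_notMem hvt]; omega, ?_⟩⟩
          exact_mod_cast hextend true t (fun y hy => by simpa using (mem_filter.1 (hts hy)).2) hpw

theorem ramseyNumber_spec (r : ℕ) (c : Sym2 (Fin (RamseyNumber r)) → Bool) :
    ∃ (A : Finset (Fin (RamseyNumber r))) (b : Bool),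
      r ≤ #A ∧ ∀ i ∈ A, ∀ j ∈ A, i ≠ j → c s(i, j) = b := by
  refine Nat.sInf_mem (s := {n : ℕ | ∀ c : Sym2 (Fin n) → Bool, ∃ (A : Finset (Fin n)) (b : Bool),
    r ≤ A.card ∧ ∀ i ∈ A, ∀ j ∈ A, i ≠ j → c s(i, j) = b}) ⟨(r + r).choose r, fun c => ?_⟩ c
  obtain ⟨A, -, ⟨hA, hpw⟩ | ⟨hA, hpw⟩⟩ :=
    exists_pairwise_color_of_choose_le c r r univ (by simp)
  exacts [⟨A, false, hA, fun i hi j hj => hpw hi hj⟩, ⟨A, true, hA, fun i hi j hj => hpw hi hj⟩]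

theorem self_le_ramseyNumber (r : ℕ) : r ≤ RamseyNumber r := by
  obtain ⟨A, -, hA, -⟩ := ramseyNumber_spec r fun _ => false
  simpa using hA.trans (card_le_univ A)

theorem exists_orderEmbedding_forall_lt_iff (r : ℕ)
    (M : Fin (RamseyNumber r) → Fin (RamseyNumber r) → Prop) :
    ∃ (σ : Fin r ↪o Fin (RamseyNumber r)) (q : Prop), ∀ i j, i < j → (M (σ i) (σ j) ↔ q) := by
  classical
  obtain ⟨A, b, hA, hmono⟩ := ramseyNumber_spec r fun z => decide (M z.inf z.sup)
  obtain ⟨B, hBA, hB⟩ := exists_subset_card_eq hA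
  refine ⟨B.orderEmbOfFin hB, b = true, fun i j hij => ?_⟩
  have hlt := (B.orderEmbOfFin hB).strictMono hij
  have := hmono _ (hBA (orderEmbOfFin_mem B hB i)) _ (hBA (orderEmbOfFin_mem B hB j)) hlt.ne
  rw [← this, Sym2.inf_mk, Sym2.sup_mk, inf_eq_left.2 hlt.le, sup_eq_right.2 hlt.le,
    decide_eq_true_iff]

section Chain

variable {α : Type*}

def HasChain (p : Prop) (n : ℕ) (𝓕 : Set (Set α)) : Prop :=
  ∃ (H : Fin (n + 1) → Set α) (e : Fin n → α), (∀ i, H i ∈ 𝓕) ∧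
    (∀ j, e j ∈ H j.castSucc ↔ ¬p) ∧ ∀ j i, j.castSucc < i → (e j ∈ H i ↔ p)

variable {p : Prop} {n : ℕ} {𝓕 𝓖 : Set (Set α)}

theorem hasChain_zero {S : Set α} (hS : S ∈ 𝓕) : HasChain p 0 𝓕 :=
  ⟨fun _ => S, Fin.elim0, fun _ => hS, fun j => j.elim0, fun j => j.elim0⟩

theorem HasChain.mono (h : HasChain p n 𝓕) (h𝓕𝓖 : 𝓕 ⊆ 𝓖) : HasChain p n 𝓖 :=
  let ⟨H, e, hH, hdiag, hbelow⟩ := h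
  ⟨H, e, fun i => h𝓕𝓖 (hH i), hdiag, hbelow⟩

theorem HasChain.cons (h : HasChain p n 𝓕) {B : Set α} {x : α} (hxB : x ∈ B ↔ ¬p)
    (hx : ∀ S ∈ 𝓕, x ∈ S ↔ p) : HasChain p (n + 1) (insert B 𝓕) := by
  obtain ⟨H, e, hH, hdiag, hbelow⟩ := h
  refine ⟨Fin.cons B H, Fin.cons x e, Fin.cases (by simp) fun i => by simp [hH i],
    Fin.cases (by simpa using hxB) fun j => by simpa [← Fin.succ_castSucc] using hdiag j,
    Fin.cases (Fin.cases (by simp) fun i _ => by simpa using hx _ (hH i)) fun j => ?_⟩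
  refine Fin.cases (by simp) fun i hji => ?_
  simpa using hbelow j i (by simpa [← Fin.succ_castSucc] using hji)

theorem hasChain_one {A B : Set α} {x : α} (hxA : x ∈ A ↔ ¬p) (hxB : x ∈ B ↔ p) :
    HasChain p 1 {A, B} :=
  (hasChain_zero (Set.mem_singleton B)).cons hxA (by simpa using hxB)

theorem Finset.exists_mem_notMem_mem {F : Finset (Set α)} (h : 1 < #F) :
    ∃ A ∈ F, ∃ B ∈ F, ∃ x, x ∉ A ∧ x ∈ B := by
  obtain ⟨A, hA, B, hB, hAB⟩ := one_lt_card.1 h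
  obtain ⟨x, hx⟩ := Set.symmDiff_nonempty.2 hAB
  rcases hx with ⟨hxA, hxB⟩ | ⟨hxB, hxA⟩
  exacts [⟨B, hB, A, hA, x, hxB, hxA⟩, ⟨A, hA, B, hB, x, hxA, hxB⟩]

theorem hasChain_or_hasChain_of_choose_lt (u d : ℕ) {F : Finset (Set α)}
    (h : (u + d).choose u < #F) :
    HasChain True (u + 1) (F : Set (Set α)) ∨ HasChain False (d + 1) (F : Set (Set α)) := by
  classical
  obtain ⟨A, hA, B, hB, x, hxA, hxB⟩ := F.exists_mem_notMem_mem <|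
    (Nat.one_le_iff_ne_zero.2 (Nat.choose_pos (Nat.le_add_right u d)).ne').trans_lt h
  have hAB : ({A, B} : Set (Set α)) ⊆ (F : Set (Set α)) := by
    simp [Set.insert_subset_iff, hA, hB]
  have hsub {P : Set α → Prop} [DecidablePred P] :
      ((F.filter P : Finset (Set α)) : Set (Set α)) ⊆ F :=
    coe_subset.2 (filter_subset _ _)
  match u, d, h with
  | 0, _, _ => exact .inl ((hasChain_one (by simpa) (by simpa)).mono hAB)
  | _ + 1, 0, _ => exact .inr ((hasChain_one (by simpa) (by simpa)).mono (Set.pair_comm A B ▸ hAB))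
  | u + 1, d + 1, h =>
    have hpascal : (u + 1 + (d + 1)).choose (u + 1) =
        (u + (d + 1)).choose u + (u + 1 + d).choose (u + 1) := by
      rw [show u + 1 + (d + 1) = u + (d + 1) + 1 by omega, Nat.choose_succ_succ',
        show u + (d + 1) = u + 1 + d by omega]
    have hsplit := card_filter_add_card_filter_not (s := F) (fun S => x ∈ S)
    by_cases hin : (u + (d + 1)).choose u < #(F.filter (x ∈ ·))
    · rcases hasChain_or_hasChain_of_choose_lt u (d + 1) hin with hup | hdown
      · refine .inl ((hup.cons (B := A) (x := x) (by simpa) fun S hS => ?_).mono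
          (Set.insert_subset hA hsub))
        simpa using (mem_filter.1 hS).2
      · exact .inr (hdown.mono hsub)
    · rcases hasChain_or_hasChain_of_choose_lt (u + 1) d (F := F.filter (x ∉ ·)) (by omega)
        with hup | hdown
      · exact .inl (hup.mono hsub)
      · refine .inr ((hdown.cons (B := B) (x := x) (by simpa) fun S hS => ?_).mono
          (Set.insert_subset hB hsub))
        simpa using (mem_filter.1 hS).2

end Chain

section Realized

variable {α : Type*} {a b : ℕ} {N : Fin a → Fin b → Prop} {𝓗 : Set (Set α)}

def Realized (N : Fin a → Fin b → Prop) (𝓗 : Set (Set α)) : Prop :=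
  ∃ (H : Fin a → Set α) (e : Fin b → α), (∀ i, H i ∈ 𝓗) ∧ ∀ i j, e j ∈ H i ↔ N i j

theorem Realized.submatrix {a' b' : ℕ} (h : Realized N 𝓗) (f : Fin a' → Fin a)
    (g : Fin b' → Fin b) : Realized (fun i j => N (f i) (g j)) 𝓗 :=
  let ⟨H, e, hH, he⟩ := h
  ⟨H ∘ f, e ∘ g, fun i => hH (f i), fun i j => he (f i) (g j)⟩

theorem Realized.foundIn (h : Realized N 𝓗) (hrow : Function.Injective N)
    (hcol : Function.Injective (Function.swap N)) (hcolne : ∀ j, ∃ i, N i j) : FoundIn N 𝓗 := by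
  obtain ⟨H, e, hH, he⟩ := h
  refine ⟨H, e, fun i i' hii' => hrow ?_, fun j j' hjj' => hcol ?_, hH,
    fun j => ?_, he⟩
  · ext j; rw [← he, ← he, hii']
  · ext i; simp only [Function.swap, ← he, hjj']
  · obtain ⟨i, hi⟩ := hcolne j
    exact ⟨H i, hH i, (he i j).2 hi⟩

def chainPattern (p q : Prop) (n : ℕ) : Fin (n + 1) → Fin n → Prop :=
  fun i j => if (j : ℕ) < i then p else if (j : ℕ) = i then ¬p else q

theorem HasChain.exists_realized_chainPattern {p : Prop} {r : ℕ}
    (h : HasChain p (RamseyNumber r) 𝓗) : ∃ q, Realized (chainPattern p q r) 𝓗 := by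
  obtain ⟨H, e, hH, hdiag, hbelow⟩ := h
  obtain ⟨σ, q, hq⟩ := exists_orderEmbedding_forall_lt_iff r fun i j => e j ∈ H i.castSucc
  refine ⟨q, Fin.snoc (fun i => H (σ i).castSucc) (H (Fin.last _)), e ∘ σ,
    Fin.lastCases (by simpa using hH _) fun i => by simpa using hH _, fun i j => ?_⟩
  induction i using Fin.lastCases with
  | last => simpa [chainPattern] using hbelow (σ j) _ (Fin.castSucc_lt_last _)
  | cast i =>
    simp only [Fin.snoc_castSucc, Function.comp_apply, chainPattern, Fin.val_castSucc]
    rcases lt_trichotomy j i with hji | rfl | hij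
    · simpa [hji] using hbelow (σ j) _ (Fin.castSucc_lt_castSucc_iff.2 (σ.strictMono hji))
    · simpa using hdiag (σ j)
    · simpa [lt_asymm hij, Fin.val_ne_of_ne hij.ne'] using hq i j hij

end Realized

section Patterns

variable {n : ℕ}

theorem chainPattern_true_true : chainPattern True True n = cosingletonMatrix n := by
  funext i j
  simp only [chainPattern, cosingletonMatrix, eq_iff_iff]
  split_ifs <;> simp <;> omega

theorem chainPattern_true_false : chainPattern True False n = monotoneMatrix n := by
  funext i j
  simp only [chainPattern, monotoneMatrix, eq_iff_iff]
  split_ifs <;> simp <;> omega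

theorem chainPattern_false_false_cons :
    (fun i j => chainPattern False False n
      ((Fin.cons (Fin.last n) Fin.castSucc : Fin (n + 1) → Fin (n + 1)) i) j) =
      singletonMatrix n := by
  funext i j
  induction i using Fin.cases <;>
  · simp only [chainPattern, singletonMatrix, eq_iff_iff, Fin.cons_zero, Fin.cons_succ,
      Fin.val_last, Fin.val_castSucc, Fin.val_succ, Fin.val_zero]
    split_ifs <;> simp <;> omega

theorem chainPattern_false_true_rev :
    (fun i j => chainPattern False True n i.rev j.rev) = monotoneMatrix n := by
  funext i j
  simp only [chainPattern, monotoneMatrix, eq_iff_iff, Fin.val_rev]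
  split_ifs <;> simp <;> omega

end Patterns

section FoundIn

variable {α : Type*} {n : ℕ} {𝓗 : Set (Set α)}

theorem Realized.foundIn_singletonMatrix (h : Realized (singletonMatrix n) 𝓗) :
    FoundIn (singletonMatrix n) 𝓗 := by
  refine h.foundIn (.of_lt_imp_ne fun i i' hii' heq => ?_) (.of_lt_imp_ne fun j j' hjj' heq => ?_)
    fun j => ⟨j.succ, rfl⟩
  · have := congrFun heq ⟨i' - 1, by omega⟩
    simp [singletonMatrix] at this
    omega
  · have := congrFun heq j.succ
    simp [singletonMatrix, Function.swap] at this
    omega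

theorem Realized.foundIn_cosingletonMatrix (h : Realized (cosingletonMatrix n) 𝓗) :
    FoundIn (cosingletonMatrix n) 𝓗 := by
  refine h.foundIn (.of_lt_imp_ne fun i i' hii' heq => ?_) (.of_lt_imp_ne fun j j' hjj' heq => ?_)
    fun j => ⟨Fin.last n, by simp [cosingletonMatrix]; omega⟩
  · have := congrFun heq ⟨i, by omega⟩
    simp [cosingletonMatrix] at this
    omega
  · have := congrFun heq j.castSucc
    simp [cosingletonMatrix, Function.swap] at this
    omega

theorem Realized.foundIn_monotoneMatrix (h : Realized (monotoneMatrix n) 𝓗) :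
    FoundIn (monotoneMatrix n) 𝓗 := by
  refine h.foundIn (.of_lt_imp_ne fun i i' hii' heq => ?_) (.of_lt_imp_ne fun j j' hjj' heq => ?_)
    fun j => ⟨Fin.last n, by simp [monotoneMatrix]⟩
  · have := congrFun heq ⟨i, by omega⟩
    simp [monotoneMatrix] at this
    omega
  · have := congrFun heq j'.castSucc
    simp [monotoneMatrix, Function.swap] at this
    omega

theorem Realized.monotoneMatrix_of_le {m : ℕ} (h : Realized (monotoneMatrix n) 𝓗) (hmn : m ≤ n) :
    Realized (monotoneMatrix m) 𝓗 :=
  h.submatrix (Fin.castLE (by omega)) (Fin.castLE hmn)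

end FoundIn

/-- **Theorem 2.** Any collection of more than
`(R(k+1)+R(l+1)-2).choose (R(k+1)-1)` pairwise distinct sets contains the
`(k+1)`-singleton matrix, the `(l+1)`-cosingleton matrix, or the
`min (k+1) (l+1)`-monotone matrix. -/
theorem singleton_or_cosingleton_or_monotone {α : Type*} (k l : ℕ) (𝓗 : Finset (Set α))
    (h : 𝓗.card >
      (RamseyNumber (k + 1) + RamseyNumber (l + 1) - 2).choose (RamseyNumber (k + 1) - 1)) :
    FoundIn (singletonMatrix (k + 1)) (↑𝓗 : Set (Set α)) ∨
    FoundIn (cosingletonMatrix (l + 1)) (↑𝓗 : Set (Set α)) ∨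
    FoundIn (monotoneMatrix (min (k + 1) (l + 1))) (↑𝓗 : Set (Set α)) := by
  obtain ⟨u, hu⟩ := Nat.exists_eq_add_one.2 ((Nat.succ_pos l).trans_le (self_le_ramseyNumber _))
  obtain ⟨d, hd⟩ := Nat.exists_eq_add_one.2 ((Nat.succ_pos k).trans_le (self_le_ramseyNumber _))
  rw [hu, hd, show d + 1 + (u + 1) - 2 = d + u by omega, add_tsub_cancel_right,
    Nat.choose_symm_add, add_comm d u] at h
  rcases hasChain_or_hasChain_of_choose_lt u d h with hup | hdown
  · obtain ⟨q, hq⟩ := (hu ▸ hup).exists_realized_chainPattern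
    rcases Classical.propComplete q with rfl | rfl
    · exact .inr (.inl (chainPattern_true_true ▸ hq).foundIn_cosingletonMatrix)
    · exact .inr (.inr ((chainPattern_true_false ▸ hq).monotoneMatrix_of_le
        (min_le_right _ _)).foundIn_monotoneMatrix)
  · obtain ⟨q, hq⟩ := (hd ▸ hdown).exists_realized_chainPattern
    rcases Classical.propComplete q with rfl | rfl
    · have hmono := chainPattern_false_true_rev ▸ hq.submatrix Fin.rev Fin.rev
      exact .inr (.inr (hmono.monotoneMatrix_of_le (min_le_left _ _)).foundIn_monotoneMatrix)
    · have hsingle := chainPattern_false_false_cons ▸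
        hq.submatrix (Fin.cons (Fin.last _) Fin.castSucc) id
      exact .inl hsingle.foundIn_singletonMatrix
end

section
/- For every natural number k, if 𝓗 is a collection of pairwise distinct sets with |𝓗| > k+1, then at least one of the following holds: the (k+1)-singleton matrix can be found in 𝓗, or the 2-cosingleton matrix can be found in 𝓗, or the 2-monotone matrix can be found in 𝓗. -/
/-! If `𝓗` contains neither `S̄²` nor `M²`, an element `x` missing from some `A ∈ 𝓗` lies in at
most one set of `𝓗`: otherwise there are distinct `B, C ∈ 𝓗` containing `x` and, after swapping,
some `y ∈ C \ B`, and the rows `A, B, C` over the columns `x, y` form `S̄²` if `y ∈ A` and `M²` if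
`y ∉ A`. Now let `G₀` be a minimal set of `𝓗`. Each other set `F` has an element outside `G₀`,
which by the above lies in no other set of `𝓗`; so `G₀` and `k + 1` further sets, over one such
element for each of them, form `Sᵏ⁺¹`. -/

open Function

section Incidence

variable {α : Type*} {a b : ℕ} {N : Fin a → Fin b → Prop}

theorem FoundIn.of_incidence (hrows : Injective N) (hcols : Injective (flip N))
    (hcover : ∀ j, ∃ i, N i j) {𝓗 : Set (Set α)} (H : Fin a → Set α) (e : Fin b → α)
    (hH : ∀ i, H i ∈ 𝓗) (hN : ∀ i j, e j ∈ H i ↔ N i j) : FoundIn N 𝓗 := by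
  refine ⟨H, e, fun i i' hi => hrows ?_, fun j j' hj => hcols ?_, hH, fun j => ?_, hN⟩
  · funext j
    exact propext ((hN i j).symm.trans (hi ▸ hN i' j))
  · funext i
    exact propext ((hN i j).symm.trans (hj ▸ hN i j'))
  · obtain ⟨i, hij⟩ := hcover j
    exact ⟨H i, hH i, (hN i j).2 hij⟩

end Incidence

theorem singletonMatrix_injective (n : ℕ) : Injective (singletonMatrix n) := by
  refine Injective.of_lt_imp_ne fun i i' hlt h => ?_
  have := Iff.of_eq (congrFun h ⟨i' - 1, by omega⟩)
  simp only [singletonMatrix] at this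
  omega

theorem flip_singletonMatrix_injective (n : ℕ) : Injective (flip (singletonMatrix n)) := by
  refine Injective.of_lt_imp_ne fun j j' hlt h => ?_
  have := Iff.of_eq (congrFun h j.succ)
  simp only [flip, singletonMatrix, Fin.val_succ, true_iff] at this
  omega

theorem cosingletonMatrix_injective (n : ℕ) : Injective (cosingletonMatrix n) := by
  refine Injective.of_lt_imp_ne fun i i' hlt h => ?_
  have := Iff.of_eq (congrFun h ⟨i, by omega⟩)
  simp only [cosingletonMatrix] at this
  omega

theorem flip_cosingletonMatrix_injective (n : ℕ) : Injective (flip (cosingletonMatrix n)) := by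
  refine Injective.of_lt_imp_ne fun j j' hlt h => ?_
  have := Iff.of_eq (congrFun h j.castSucc)
  simp only [flip, cosingletonMatrix, Fin.val_castSucc, ne_eq, not_true_eq_false, false_iff,
    not_not] at this
  omega

theorem monotoneMatrix_injective (n : ℕ) : Injective (monotoneMatrix n) := by
  refine Injective.of_lt_imp_ne fun i i' hlt h => ?_
  have := Iff.of_eq (congrFun h ⟨i, by omega⟩)
  simp only [monotoneMatrix] at this
  omega

theorem flip_monotoneMatrix_injective (n : ℕ) : Injective (flip (monotoneMatrix n)) := by
  refine Injective.of_lt_imp_ne fun j j' hlt h => ?_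
  have := Iff.of_eq (congrFun h j.succ)
  simp only [flip, monotoneMatrix, Fin.val_succ] at this
  omega

section Construction

variable {α : Type*}

theorem foundIn_cosingletonMatrix_two_or_monotoneMatrix_two {𝓗 : Set (Set α)} {A B C : Set α}
    (hA : A ∈ 𝓗) (hB : B ∈ 𝓗) (hC : C ∈ 𝓗) {x y : α} (hxA : x ∉ A) (hxB : x ∈ B)
    (hxC : x ∈ C) (hyB : y ∉ B) (hyC : y ∈ C) :
    FoundIn (cosingletonMatrix 2) 𝓗 ∨ FoundIn (monotoneMatrix 2) 𝓗 := by
  have hH : ∀ i, ![A, B, C] i ∈ 𝓗 := fun i => by fin_cases i <;> assumption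
  by_cases hyA : y ∈ A
  · refine .inl <| .of_incidence (cosingletonMatrix_injective 2)
      (flip_cosingletonMatrix_injective 2) (fun j => ⟨2, j.is_lt.ne'⟩)
      ![A, B, C] ![x, y] hH fun i j => ?_
    fin_cases i <;> fin_cases j <;> simp [cosingletonMatrix, *]
  · refine .inr <| .of_incidence (monotoneMatrix_injective 2)
      (flip_monotoneMatrix_injective 2) (fun j => ⟨2, j.is_lt⟩)
      ![A, B, C] ![x, y] hH fun i j => ?_
    fin_cases i <;> fin_cases j <;> simp [monotoneMatrix, *]

theorem eq_of_notMem_of_mem_of_mem {𝓗 : Set (Set α)}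
    (hcos : ¬ FoundIn (cosingletonMatrix 2) 𝓗) (hmon : ¬ FoundIn (monotoneMatrix 2) 𝓗)
    {A B C : Set α} (hA : A ∈ 𝓗) (hB : B ∈ 𝓗) (hC : C ∈ 𝓗) {x : α} (hxA : x ∉ A)
    (hxB : x ∈ B) (hxC : x ∈ C) : B = C := by
  by_contra hBC
  have hdiff : (∃ y ∈ C, y ∉ B) ∨ ∃ y ∈ B, y ∉ C := by
    by_contra! hsub
    exact hBC (Set.Subset.antisymm hsub.2 hsub.1)
  rcases hdiff with ⟨y, hyC, hyB⟩ | ⟨y, hyB, hyC⟩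
  · exact (foundIn_cosingletonMatrix_two_or_monotoneMatrix_two hA hB hC hxA hxB hxC hyB hyC).elim
      hcos hmon
  · exact (foundIn_cosingletonMatrix_two_or_monotoneMatrix_two hA hC hB hxA hxC hxB hyC hyB).elim
      hcos hmon

theorem foundIn_singletonMatrix {𝓗 : Finset (Set α)} {n : ℕ} (hn : n < 𝓗.card)
    (hunique : ∀ x (A B C : Set α), A ∈ 𝓗 → B ∈ 𝓗 → C ∈ 𝓗 → x ∉ A → x ∈ B → x ∈ C → B = C) :
    FoundIn (singletonMatrix n) (↑𝓗 : Set (Set α)) := by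
  obtain ⟨G₀, hG₀, hmin⟩ := 𝓗.exists_minimal (Finset.card_pos.mp (by omega))
  have hrest : n ≤ (𝓗.erase G₀).card := by rw [Finset.card_erase_of_mem hG₀]; omega
  set F : Fin n → Set α := fun i => ((𝓗.erase G₀).equivFin.symm (Fin.castLE hrest i)).1
  have hF : ∀ i, F i ∈ 𝓗.erase G₀ := fun i => Subtype.prop _
  have hF_inj : Injective F := Subtype.val_injective.comp
    ((𝓗.erase G₀).equivFin.symm.injective.comp (Fin.castLE_injective hrest))
  have hprivate : ∀ i, ∃ x ∈ F i, x ∉ G₀ := fun i => Set.not_subset.mp fun hsub =>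
    Finset.ne_of_mem_erase (hF i) (hsub.antisymm (hmin (Finset.mem_of_mem_erase (hF i)) hsub))
  choose e heF heG₀ using hprivate
  refine .of_incidence (singletonMatrix_injective n) (flip_singletonMatrix_injective n)
    (fun j => ⟨j.succ, rfl⟩) (Fin.cons G₀ F) e (Fin.cases hG₀ fun i => by
      simpa using Finset.mem_of_mem_erase (hF i)) fun i j => ?_
  induction i using Fin.cases with
  | zero => simpa [singletonMatrix] using heG₀ j
  | succ i =>
    simp only [Fin.cons_succ, singletonMatrix, Fin.val_succ, add_left_inj, ← Fin.ext_iff]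
    refine ⟨fun hji => hF_inj ?_, fun hij => hij ▸ heF j⟩
    exact hunique (e j) G₀ (F i) (F j) hG₀ (Finset.mem_of_mem_erase (hF i))
      (Finset.mem_of_mem_erase (hF j)) (heG₀ j) hji (heF j)

end Construction

/-- **The case `l = 1`:** any collection of more than `k+1` pairwise distinct sets
contains the `(k+1)`-singleton matrix, the `2`-cosingleton matrix, or the
`2`-monotone matrix. -/
theorem case_l_eq_one {α : Type*} (k : ℕ) (𝓗 : Finset (Set α)) (h : 𝓗.card > k + 1) :
    FoundIn (singletonMatrix (k + 1)) (↑𝓗 : Set (Set α)) ∨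
    FoundIn (cosingletonMatrix 2) (↑𝓗 : Set (Set α)) ∨
    FoundIn (monotoneMatrix 2) (↑𝓗 : Set (Set α)) := by
  by_contra! hnone
  obtain ⟨hsing, hcos, hmon⟩ := hnone
  exact hsing <| foundIn_singletonMatrix h fun _ _ _ _ hA hB hC =>
    eq_of_notMem_of_mem_of_mem hcos hmon hA hB hC
end

section
/- For all natural numbers k and l, let 𝓗 be the collection of all l-element subsets of [k+l] = {1, 2, …, k+l} (so |𝓗| = (k+l choose l)). Then none of the following matrices can be found in 𝓗: the (k+1)-singleton matrix, the (l+1)-cosingleton matrix, and the min(k+1, l+1)-monotone matrix. -/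
open Set

section FoundIn

variable {α : Type*} {a b : ℕ} {N : Fin a → Fin b → Prop} {𝓗 : Set (Set α)} {m : ℕ∞}

theorem FoundIn.card_le_of_row_true (hN : FoundIn N 𝓗) (h𝓗 : ∀ S ∈ 𝓗, S.encard ≤ m)
    (i : Fin a) (hi : ∀ j, N i j) : (b : ℕ∞) ≤ m := by
  obtain ⟨H, e, -, he, hH, -, hinc⟩ := hN
  calc (b : ℕ∞) = ENat.card (Fin b) := by simp
    _ ≤ (range e).encard := he.encard_range
    _ ≤ (H i).encard := encard_le_encard (range_subset_iff.2 fun j => (hinc i j).2 (hi j))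
    _ ≤ m := h𝓗 _ (hH i)

theorem FoundIn.card_le_of_row_false (hN : FoundIn N 𝓗)
    (h𝓗 : ∀ S ∈ 𝓗, (⋃₀ 𝓗 \ S).encard ≤ m) (i : Fin a) (hi : ∀ j, ¬ N i j) :
    (b : ℕ∞) ≤ m := by
  obtain ⟨H, e, -, he, hH, he𝓗, hinc⟩ := hN
  calc (b : ℕ∞) = ENat.card (Fin b) := by simp
    _ ≤ (range e).encard := he.encard_range
    _ ≤ (⋃₀ 𝓗 \ H i).encard :=
        encard_le_encard (range_subset_iff.2 fun j => ⟨he𝓗 j, fun h => hi j ((hinc i j).1 h)⟩)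
    _ ≤ m := h𝓗 _ (hH i)

end FoundIn

section Binomial

variable {k l : ℕ} {S : Set ℕ}

theorem encard_eq_of_subset_Icc_of_ncard_eq (hS : S ⊆ Icc 1 (k + l) ∧ S.ncard = l) :
    S.encard = l := by
  rw [← ((finite_Icc 1 (k + l)).subset hS.1).cast_ncard_eq, hS.2]

theorem encard_sUnion_diff_le (hS : S ⊆ Icc 1 (k + l) ∧ S.ncard = l) :
    (⋃₀ {T : Set ℕ | T ⊆ Icc 1 (k + l) ∧ T.ncard = l} \ S).encard ≤ k := by
  have hIcc : (Icc 1 (k + l)).encard = k + l := by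
    rw [← (finite_Icc 1 (k + l)).cast_ncard_eq, ncard_Icc_nat]; norm_cast
  have hsplit := encard_sdiff_add_encard_of_subset hS.1
  rw [hIcc, encard_eq_of_subset_Icc_of_ncard_eq hS] at hsplit
  calc _ ≤ (Icc 1 (k + l) \ S).encard :=
        encard_le_encard (sdiff_subset_sdiff_left (sUnion_subset fun T hT => hT.1))
    _ = k := WithTop.add_right_cancel (ENat.natCast_ne_top l) hsplit

end Binomial

/-- **Tightness of the bound:** in the collection of all `l`-element subsets of
`[k+l] = {1, …, k+l}`, none of the `(k+1)`-singleton, `(l+1)`-cosingleton and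
`min (k+1) (l+1)`-monotone matrices can be found. -/
theorem binomial_collection_avoids (k l : ℕ) :
    ¬ FoundIn (singletonMatrix (k + 1))
        {S : Set ℕ | S ⊆ Set.Icc 1 (k + l) ∧ S.ncard = l} ∧
    ¬ FoundIn (cosingletonMatrix (l + 1))
        {S : Set ℕ | S ⊆ Set.Icc 1 (k + l) ∧ S.ncard = l} ∧
    ¬ FoundIn (monotoneMatrix (min (k + 1) (l + 1)))
        {S : Set ℕ | S ⊆ Set.Icc 1 (k + l) ∧ S.ncard = l} := by
  set 𝓗 : Set (Set ℕ) := {S | S ⊆ Icc 1 (k + l) ∧ S.ncard = l}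
  have hcard : ∀ S ∈ 𝓗, S.encard ≤ l := fun _ hS =>
    (encard_eq_of_subset_Icc_of_ncard_eq hS).le
  have hcompl_card : ∀ S ∈ 𝓗, (⋃₀ 𝓗 \ S).encard ≤ k := fun _ => encard_sUnion_diff_le
  refine ⟨fun hN => ?_, fun hN => ?_, fun hN => ?_⟩
  · have := hN.card_le_of_row_false hcompl_card 0 fun j h => by simp [singletonMatrix] at h
    norm_cast at this; omega
  · have := hN.card_le_of_row_true hcard (Fin.last _) fun j => by
      simp only [cosingletonMatrix, Fin.val_last]; omega
    norm_cast at this; omega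
  · have hk := hN.card_le_of_row_false hcompl_card 0 fun j h => by simp [monotoneMatrix] at h
    have hl := hN.card_le_of_row_true hcard (Fin.last _) fun j => by
      simp only [monotoneMatrix, Fin.val_last]; omega
    norm_cast at hk hl; omega
end

section
/- For every natural number l ≥ 2, there exists a collection 𝓗 of pairwise distinct subsets of [2l] = {1, 2, …, 2l} with |𝓗| = (2l choose l) + (2l−3 choose l−1) such that none of the (l+1)-singleton matrix, the (l+1)-cosingleton matrix, and the (l+1)-monotone matrix can be found in 𝓗. -/
/-!
The family consists of the sets `S ⊆ [2l]` whose pair `(S ∩ {1, 2, 3}, #S)` is one of nine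
admissible profiles, all of size `l - 1`, `l` or `l + 1`. A profile `(T, n)` is realised by
`(2l - 3).choose (n - #T)` sets, and these add up to the claimed count.

In a forbidden configuration with column set `E`, `#E = l + 1`, a row missing `E` must be the
complement `[2l] \ E`, since members have size at least `l - 1`, and a row containing `E` must
be `E` itself, since members have size at most `l + 1`. The profiles then dictate how `1`, `2`,
`3` lie in these rows and in the rows through the columns labelled `1`, `2`, `3`, and no choice
is consistent. For the monotone matrix, say: `E` has size `l + 1`, so it contains `3` and both or
neither of `1, 2`, while its complement has size `l - 1`, so it contains exactly one of them.
-/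

open Finset

theorem Finset.card_filter_powerset_inter_eq_and_card_eq {α : Type*} [DecidableEq α]
    {U A T : Finset α} (hA : A ⊆ U) (hT : T ⊆ A) {n : ℕ} (hn : #T ≤ n) :
    #{S ∈ U.powerset | S ∩ A = T ∧ #S = n} = (#(U \ A)).choose (n - #T) := by
  rw [← card_powersetCard]
  have hTK {K : Finset α} (hK : K ⊆ U \ A) : (T ∪ K) ∩ A = T ∧ (T ∪ K) \ A = K := by
    have hKA : Disjoint K A := disjoint_of_subset_left hK sdiff_disjoint
    rw [union_inter_distrib_right, inter_eq_left.2 hT, disjoint_iff_inter_eq_empty.1 hKA,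
      union_empty, union_sdiff_distrib, sdiff_eq_empty_iff_subset.2 hT, hKA.sdiff_eq_left,
      empty_union]
    exact ⟨rfl, rfl⟩
  refine card_bij' (fun S _ ↦ S \ A) (fun K _ ↦ T ∪ K) ?_ ?_ ?_ ?_
  · intro S hS
    simp only [mem_filter, mem_powerset] at hS
    obtain ⟨hSU, hST, rfl⟩ := hS
    rw [mem_powersetCard, ← hST, ← card_sdiff_add_card_inter S A, Nat.add_sub_cancel]
    exact ⟨sdiff_subset_sdiff hSU le_rfl, rfl⟩
  · intro K hK
    rw [mem_powersetCard] at hK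
    obtain ⟨hKU, hK⟩ := hK
    simp only [mem_filter, mem_powerset, ← card_sdiff_add_card_inter (T ∪ K) A, hTK hKU]
    exact ⟨union_subset (hT.trans hA) (hKU.trans sdiff_subset), trivial, by omega⟩
  · intro S hS
    rw [← (mem_filter.1 hS).2.1, union_comm, sdiff_union_inter]
  · intro K hK
    exact (hTK (mem_powersetCard.1 hK).1).2

theorem Nat.choose_add_three (n k : ℕ) : (n + 3).choose (k + 3) =
    n.choose k + 3 * n.choose (k + 1) + 3 * n.choose (k + 2) + n.choose (k + 3) := by
  simp only [Nat.choose_succ_succ']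
  ring

def sllProfiles (l : ℕ) : Finset (Finset ℕ × ℕ) :=
  {({3}, l), ({3}, l + 1), ({1, 2, 3}, l), ({1, 2, 3}, l + 1),
    ({1}, l - 1), ({1}, l), ({2}, l - 1), ({2}, l), ({1, 2}, l)}

def sllFamily (l : ℕ) : Finset (Finset ℕ) :=
  {S ∈ (Icc 1 (2 * l)).powerset | (S ∩ Icc 1 3, #S) ∈ sllProfiles l}

theorem mem_sllFamily {l : ℕ} {S : Finset ℕ} :
    S ∈ sllFamily l ↔ S ⊆ Icc 1 (2 * l) ∧ (S ∩ Icc 1 3, #S) ∈ sllProfiles l := by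
  rw [sllFamily, mem_filter, mem_powerset]

theorem subset_Icc_and_card_le_of_mem_sllProfiles {l : ℕ} (hl : 3 ≤ l) {p : Finset ℕ × ℕ}
    (hp : p ∈ sllProfiles l) : p.1 ⊆ Icc 1 3 ∧ #p.1 ≤ p.2 := by
  simp only [sllProfiles, mem_insert, mem_singleton] at hp
  rcases hp with rfl | rfl | rfl | rfl | rfl | rfl | rfl | rfl | rfl <;>
    simp [subset_iff] <;> omega

theorem card_filter_sllFamily_profile_eq {l : ℕ} (hl : 3 ≤ l) {p : Finset ℕ × ℕ}
    (hp : p ∈ sllProfiles l) :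
    #{S ∈ sllFamily l | (S ∩ Icc 1 3, #S) = p} = (2 * l - 3).choose (p.2 - #p.1) := by
  obtain ⟨hpA, hpn⟩ := subset_Icc_and_card_le_of_mem_sllProfiles hl hp
  have hA : Icc 1 3 ⊆ Icc 1 (2 * l) := Icc_subset_Icc_right (by omega)
  have hU : #(Icc 1 (2 * l) \ Icc 1 3) = 2 * l - 3 := by
    rw [card_sdiff_of_subset hA]
    simp
  rw [← hU, ← card_filter_powerset_inter_eq_and_card_eq hA hpA hpn, sllFamily, filter_filter]
  congr 1
  refine filter_congr fun S _ ↦ ⟨fun h ↦ Prod.ext_iff.1 h.2, fun h ↦ ?_⟩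
  obtain rfl : (S ∩ Icc 1 3, #S) = p := Prod.ext h.1 h.2
  exact ⟨hp, rfl⟩

theorem card_sllFamily {l : ℕ} (hl : 2 ≤ l) :
    #(sllFamily l) = (2 * l).choose l + (2 * l - 3).choose (l - 1) := by
  -- For `l = 2` the profile `({1, 2, 3}, 2)` has `#T > n`, outside the binomial count.
  obtain rfl | hl := hl.eq_or_lt
  · decide
  obtain ⟨m, rfl⟩ := Nat.exists_eq_add_of_le' hl
  rw [card_eq_sum_card_fiberwise fun S hS ↦ (mem_sllFamily.1 hS).2,
    sum_congr rfl fun p hp ↦ card_filter_sllFamily_profile_eq (by omega) hp]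
  simp only [sllProfiles]
  repeat rw [sum_insert (by simp <;> decide)]
  have hsymm : (2 * m + 3).choose (m + 1) = (2 * m + 3).choose (m + 2) :=
    Nat.choose_symm_of_eq_add (by omega)
  simp only [Nat.succ_eq_add_one, Nat.reduceAdd, card_singleton, Nat.add_one_sub_one,
    add_tsub_cancel_right, mem_insert, OfNat.one_ne_ofNat, mem_singleton, or_self,
    not_false_eq_true, card_insert_of_notMem, Nat.reduceEqDiff, Nat.reduceSubDiff, sum_singleton]
  rw [show 2 * (m + 3) - 3 = 2 * m + 3 by omega, show 2 * (m + 3) = 2 * m + 3 + 3 by ring,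
    Nat.choose_add_three (2 * m + 3) m]
  omega

theorem card_Icc_sdiff_of_card_eq {l : ℕ} {E : Finset ℕ} (hEU : E ⊆ Icc 1 (2 * l))
    (hE : #E = l + 1) : #(Icc 1 (2 * l) \ E) = l - 1 := by
  rw [card_sdiff_of_subset hEU, Nat.card_Icc, hE]
  omega

namespace sllFamily

variable {l : ℕ} {S : Finset ℕ}

theorem subset_Icc (hS : S ∈ sllFamily l) : S ⊆ Icc 1 (2 * l) := (mem_sllFamily.1 hS).1

theorem cases_of_mem (hS : S ∈ sllFamily l) :
    (3 ∈ S ∧ (1 ∈ S ↔ 2 ∈ S) ∧ (#S = l ∨ #S = l + 1)) ∨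
    (3 ∉ S ∧ (1 ∈ S ↔ 2 ∉ S) ∧ (#S = l - 1 ∨ #S = l)) ∨
    (3 ∉ S ∧ 1 ∈ S ∧ 2 ∈ S ∧ #S = l) := by
  have htrace {x} (hx : x ∈ Icc 1 3) : x ∈ S ↔ x ∈ S ∩ Icc 1 3 := by simp [hx]
  have h1 := htrace (x := 1) (by simp)
  have h2 := htrace (x := 2) (by simp)
  have h3 := htrace (x := 3) (by simp)
  have hp := (mem_sllFamily.1 hS).2
  simp only [sllProfiles, mem_insert, mem_singleton, Prod.mk.injEq] at hp
  rcases hp with h | h | h | h | h | h | h | h | h <;>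
    simp [h.1] at h1 h2 h3 <;> simp [h1, h2, h3, h.2]

theorem card_le (hS : S ∈ sllFamily l) : #S ≤ l + 1 := by
  rcases cases_of_mem hS with h | h | h <;> omega

theorem le_card (hS : S ∈ sllFamily l) : l - 1 ≤ #S := by
  rcases cases_of_mem hS with h | h | h <;> omega

theorem of_three_mem (hS : S ∈ sllFamily l) (h3 : 3 ∈ S) :
    l ≤ #S ∧ (1 ∈ S ↔ 2 ∈ S) := by
  rcases cases_of_mem hS with ⟨-, h12, hn⟩ | ⟨h3', -⟩ | ⟨h3', -⟩
  · exact ⟨by omega, h12⟩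
  all_goals contradiction

theorem of_three_notMem (hS : S ∈ sllFamily l) (h3 : 3 ∉ S) :
    (1 ∈ S ∨ 2 ∈ S) ∧ #S ≤ l := by
  rcases cases_of_mem hS with ⟨h3', -⟩ | ⟨-, h12, hn⟩ | ⟨-, h1, -, hn⟩
  · contradiction
  · exact ⟨by tauto, by omega⟩
  · exact ⟨.inl h1, hn.le⟩

theorem of_card_eq_succ (hS : S ∈ sllFamily l) (hn : #S = l + 1) :
    3 ∈ S ∧ (1 ∈ S ↔ 2 ∈ S) := by
  rcases cases_of_mem hS with ⟨h3, h12, -⟩ | ⟨-, -, hn'⟩ | ⟨-, -, -, hn'⟩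
  · exact ⟨h3, h12⟩
  all_goals omega

theorem of_card_eq_pred (hl : 1 ≤ l) (hS : S ∈ sllFamily l) (hn : #S = l - 1) :
    3 ∉ S ∧ (1 ∈ S ↔ 2 ∉ S) := by
  rcases cases_of_mem hS with ⟨-, -, hn'⟩ | ⟨h3, h12, -⟩ | ⟨-, -, -, hn'⟩
  · omega
  · exact ⟨h3, h12⟩
  · omega

theorem eq_sdiff_of_disjoint {E : Finset ℕ} (hEU : E ⊆ Icc 1 (2 * l)) (hE : #E = l + 1)
    (hS : S ∈ sllFamily l) (hSE : Disjoint S E) : S = Icc 1 (2 * l) \ E := by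
  refine eq_of_subset_of_card_le (subset_sdiff.2 ⟨subset_Icc hS, hSE⟩) ?_
  rw [card_Icc_sdiff_of_card_eq hEU hE]
  exact le_card hS

theorem eq_of_subset {E : Finset ℕ} (hE : #E = l + 1) (hS : S ∈ sllFamily l) (hES : E ⊆ S) :
    S = E :=
  (eq_of_subset_of_card_le hES (hE ▸ card_le hS)).symm

end sllFamily

def sllSets (l : ℕ) : Finset (Set ℕ) := (sllFamily l).map coeEmb.toEmbedding

theorem exists_of_foundIn_sllSets {l a b : ℕ} {N : Fin a → Fin b → Prop}
    (h : FoundIn N (sllSets l : Set (Set ℕ))) :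
    ∃ (s : Fin a → Finset ℕ) (e : Fin b ↪ ℕ), (∀ i, s i ∈ sllFamily l) ∧
      univ.map e ⊆ Icc 1 (2 * l) ∧ ∀ i j, e j ∈ s i ↔ N i j := by
  obtain ⟨H, e, -, he, hH, heH, hN⟩ := h
  choose s hs hsH using fun i ↦ mem_map.1 (mem_coe.1 (hH i))
  refine ⟨s, ⟨e, he⟩, hs, ?_, fun i j ↦ ?_⟩
  · intro x hx
    obtain ⟨j, -, rfl⟩ := mem_map.1 hx
    obtain ⟨_, hmem, hjt⟩ := heH j
    obtain ⟨t, ht, rfl⟩ := mem_map.1 (mem_coe.1 hmem)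
    exact sllFamily.subset_Icc ht hjt
  · rw [← hN, ← hsH]
    rfl

section
variable {l : ℕ}
open sllFamily

theorem not_foundIn_singletonMatrix_sllSets (hl : 2 ≤ l) :
    ¬ FoundIn (singletonMatrix (l + 1)) (sllSets l : Set (Set ℕ)) := by
  intro h
  obtain ⟨s, e, hs, hEU, hse⟩ := exists_of_foundIn_sllSets h
  set E := univ.map e
  have hE : #E = l + 1 := by simp [E]
  have h0 : s 0 = Icc 1 (2 * l) \ E := by
    refine eq_sdiff_of_disjoint hEU hE (hs 0) (disjoint_right.2 ?_)
    simp [E, hse, singletonMatrix]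
  have hcard0 : #(s 0) = l - 1 := h0 ▸ card_Icc_sdiff_of_card_eq hEU hE
  obtain ⟨h3, h12⟩ := of_card_eq_pred (by omega) (hs 0) hcard0
  have h3E : 3 ∈ E := by
    by_contra h3E
    exact h3 (h0 ▸ mem_sdiff.2 ⟨mem_Icc.2 ⟨by norm_num, by omega⟩, h3E⟩)
  obtain ⟨j, -, hj⟩ := mem_map.1 h3E
  have hrow (j' : Fin (l + 1)) : e j' ∈ s j.succ ↔ j' = j := by
    simp [hse, singletonMatrix, Fin.ext_iff, eq_comm]
  have h3j : 3 ∈ s j.succ := hj ▸ (hrow j).2 rfl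
  have hsub : s j.succ ⊆ insert 3 (s 0) := by
    intro x hx
    by_cases hxE : x ∈ E
    · obtain ⟨j', -, rfl⟩ := mem_map.1 hxE
      rw [(hrow j').1 hx, hj]
      exact mem_insert_self ..
    · exact mem_insert_of_mem (h0 ▸ mem_sdiff.2 ⟨subset_Icc (hs _) hx, hxE⟩)
  obtain ⟨hl_le, h12j⟩ := of_three_mem (hs _) h3j
  have hj_eq : s j.succ = insert 3 (s 0) :=
    eq_of_subset_of_card_le hsub (by rw [card_insert_of_notMem h3]; omega)
  simp only [hj_eq, mem_insert] at h12j
  tauto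

theorem not_foundIn_monotoneMatrix_sllSets (hl : 2 ≤ l) :
    ¬ FoundIn (monotoneMatrix (l + 1)) (sllSets l : Set (Set ℕ)) := by
  intro h
  obtain ⟨s, e, hs, hEU, hse⟩ := exists_of_foundIn_sllSets h
  set E := univ.map e
  have hE : #E = l + 1 := by simp [E]
  have hlast : s (Fin.last _) = E := by
    refine eq_of_subset hE (hs _) fun x hx ↦ ?_
    obtain ⟨j, -, rfl⟩ := mem_map.1 hx
    simpa [hse, monotoneMatrix] using j.is_le
  obtain ⟨h3E, h12E⟩ := of_card_eq_succ (hlast ▸ hs _) hE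
  have h0 : s 0 = Icc 1 (2 * l) \ E := by
    refine eq_sdiff_of_disjoint hEU hE (hs 0) (disjoint_right.2 ?_)
    simp [E, hse, monotoneMatrix]
  obtain ⟨-, h12⟩ := of_card_eq_pred (by omega) (hs 0) (h0 ▸ card_Icc_sdiff_of_card_eq hEU hE)
  have hmem0 {x : ℕ} (hx : x ∈ Icc 1 (2 * l)) : x ∈ s 0 ↔ x ∉ E := by
    rw [h0, mem_sdiff]
    exact and_iff_right hx
  rw [hmem0 (mem_Icc.2 ⟨le_rfl, by omega⟩), hmem0 (mem_Icc.2 ⟨by norm_num, by omega⟩)]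
    at h12
  tauto

theorem not_foundIn_cosingletonMatrix_sllSets (hl : 2 ≤ l) :
    ¬ FoundIn (cosingletonMatrix (l + 1)) (sllSets l : Set (Set ℕ)) := by
  intro h
  obtain ⟨s, e, hs, hEU, hse⟩ := exists_of_foundIn_sllSets h
  set E := univ.map e
  have hE : #E = l + 1 := by simp [E]
  have hlast : s (Fin.last _) = E := by
    refine eq_of_subset hE (hs _) fun x hx ↦ ?_
    obtain ⟨j, -, rfl⟩ := mem_map.1 hx
    simpa [hse, cosingletonMatrix] using j.is_lt.ne'
  obtain ⟨h3E, h12E⟩ := of_card_eq_succ (hlast ▸ hs _) hE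
  have hdiag (i : Fin (l + 1)) : e i ∉ s i.castSucc := by simp [hse, cosingletonMatrix]
  have hoff (i : Fin (l + 1)) : ∀ x ∈ E, x ≠ e i → x ∈ s i.castSucc := by
    intro x hx hxi
    obtain ⟨j, -, rfl⟩ := mem_map.1 hx
    simpa [hse, cosingletonMatrix, Fin.val_inj, eq_comm] using hxi
  obtain ⟨j3, -, hj3⟩ := mem_map.1 h3E
  by_cases h1E : 1 ∈ E
  · obtain ⟨j1, -, hj1⟩ := mem_map.1 h1E
    have h3 : 3 ∈ s j1.castSucc := hoff j1 3 h3E (by rw [hj1]; decide)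
    have h2 : 2 ∈ s j1.castSucc := hoff j1 2 (h12E.1 h1E) (by rw [hj1]; decide)
    exact hdiag j1 (by rw [hj1]; exact (of_three_mem (hs _) h3).2.2 h2)
  · have h3 : 3 ∉ s j3.castSucc := hj3 ▸ hdiag j3
    obtain ⟨h12, hcard⟩ := of_three_notMem (hs _) h3
    have hsub : E.erase 3 ⊆ s j3.castSucc := fun x hx ↦
      hoff j3 x (mem_of_mem_erase hx) (hj3 ▸ ne_of_mem_erase hx)
    have hrow : s j3.castSucc = E.erase 3 :=
      (eq_of_subset_of_card_le hsub (by rw [card_erase_of_mem h3E]; omega)).symm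
    rw [hrow] at h12
    rcases h12 with h1 | h2
    · exact h1E (mem_of_mem_erase h1)
    · exact h1E (h12E.2 (mem_of_mem_erase h2))

end

/-- **Proposition (lower bound for `S(l,l)`):** for every `l ≥ 2` there is a
collection of `(2l).choose l + (2l-3).choose (l-1)` pairwise distinct subsets of
`[2l]` in which none of the `(l+1)`-singleton, `(l+1)`-cosingleton and
`(l+1)`-monotone matrices can be found. -/
theorem lower_bound_S_ll (l : ℕ) (hl : 2 ≤ l) :
    ∃ 𝓗 : Finset (Set ℕ),
      (∀ S ∈ 𝓗, S ⊆ Set.Icc 1 (2 * l)) ∧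
      𝓗.card = (2 * l).choose l + (2 * l - 3).choose (l - 1) ∧
      ¬ FoundIn (singletonMatrix (l + 1)) (↑𝓗 : Set (Set ℕ)) ∧
      ¬ FoundIn (cosingletonMatrix (l + 1)) (↑𝓗 : Set (Set ℕ)) ∧
      ¬ FoundIn (monotoneMatrix (l + 1)) (↑𝓗 : Set (Set ℕ)) := by
  refine ⟨sllSets l, ?_, ?_, not_foundIn_singletonMatrix_sllSets hl,
    not_foundIn_cosingletonMatrix_sllSets hl, not_foundIn_monotoneMatrix_sllSets hl⟩
  · intro S hS
    obtain ⟨t, ht, rfl⟩ := mem_map.1 hS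
    simpa using coe_subset.2 (sllFamily.subset_Icc ht)
  · rw [sllSets, card_map, card_sllFamily hl]
end

section
/- Let k and l be natural numbers and let 𝓗 = {H₁, H₂, …, H_m} be a collection of m pairwise distinct finite sets, each of cardinality at most l. If m > (k+l choose l), then the (k+1)-singleton matrix can be found in 𝓗. -/
open Polynomial Finset

theorem Matrix.rank_prod_eval_le {K ι κ : Type*} [Field K] [Fintype ι] [Fintype κ] {a b : ℕ}
    (P : ι → K[X]) (hP : ∀ i, (P i).natDegree ≤ a) (β : κ → Fin b → K) :
    (Matrix.of fun i j => ∏ r, (P i).eval (β j r)).rank ≤ (a + b).choose b := by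
  let c : ι → Fin (a + 1) → K := fun i d => (P i).coeff d
  let key : (Fin b → Fin (a + 1)) → Sym (Fin (a + 1)) b := fun μ => ⟨univ.val.map μ, by simp⟩
  let U : Matrix ι (Sym (Fin (a + 1)) b) K := .of fun i s => (s.1.map (c i)).prod
  let V : Matrix (Sym (Fin (a + 1)) b) κ K := .of fun s j =>
    ∑ μ with key μ = s, ∏ r, β j r ^ (μ r : ℕ)
  have hU : ∀ i μ, U i (key μ) = ∏ r, c i (μ r) := fun i μ => by
    change ((univ.val.map μ).map (c i)).prod = _
    rw [Multiset.map_map]; rfl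
  -- After expanding the product over `r`, the factor `∏ r, c i (μ r)` depends only on the
  -- multiset of values of `μ`, so the matrix factors through `Sym (Fin (a + 1)) b`.
  have hfactor : Matrix.of (fun i j => ∏ r, (P i).eval (β j r)) = U * V := by
    ext i j
    have heval : ∀ x, (P i).eval x = ∑ d : Fin (a + 1), c i d * x ^ (d : ℕ) := fun x => by
      rw [eval_eq_sum_range' (Nat.lt_succ_of_le (hP i)), ← Fin.sum_univ_eq_sum_range]
    simp only [Matrix.of_apply, heval, Fintype.prod_sum, Matrix.mul_apply, V, mul_sum]
    rw [← sum_fiberwise univ key]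
    refine sum_congr rfl fun s _ => sum_congr rfl fun μ hμ => ?_
    rw [← (mem_filter.mp hμ).2, hU, prod_mul_distrib]
  calc _ = (U * V).rank := by rw [hfactor]
    _ ≤ Fintype.card (Sym (Fin (a + 1)) b) := (U.rank_mul_le_left V).trans U.rank_le_card_width
    _ = (a + b).choose b := by simp [Sym.card_sym_eq_choose, Nat.add_right_comm]

theorem Finset.exists_fin_range_subset_insert {α : Type*} {b : ℕ} (s : Finset α) (z : α)
    (hs : #s ≤ b) : ∃ β : Fin b → α, ↑s ⊆ Set.range β ∧ Set.range β ⊆ insert z ↑s := by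
  refine ⟨fun r => if h : (r : ℕ) < #s then s.equivFin.symm ⟨r, h⟩ else z, ?_, ?_⟩
  · intro x hx
    refine ⟨Fin.castLE hs (s.equivFin ⟨x, hx⟩), ?_⟩
    simp
  · rintro _ ⟨r, rfl⟩
    dsimp only
    split_ifs
    · exact Set.mem_insert_of_mem _ (Subtype.prop _)
    · exact Set.mem_insert z _

theorem skew_bollobas_of_infinite {K : Type*} [Field K] [Infinite K] [DecidableEq K]
    {m a b : ℕ}
    (A B : Fin m → Finset K) (hA : ∀ i, #(A i) ≤ a) (hB : ∀ i, #(B i) ≤ b)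
    (hAB : ∀ i, Disjoint (A i) (B i)) (hskew : ∀ i j, i < j → (A i ∩ B j).Nonempty) :
    m ≤ (a + b).choose b := by
  obtain ⟨z, hz⟩ := (univ.biUnion A).exists_notMem
  -- `z` pads each `B j` to exactly `b` evaluation points without creating a zero on the diagonal.
  choose β hBβ hβB using fun j => (B j).exists_fin_range_subset_insert z (hB j)
  let P : Fin m → K[X] := fun i => ∏ v ∈ A i, (X - C v)
  have hP : ∀ i x, (P i).eval x = 0 ↔ x ∈ A i := fun i x => by
    simp [P, eval_prod, prod_eq_zero_iff, sub_eq_zero]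
  let M : Matrix (Fin m) (Fin m) K := .of fun i j => ∏ r, (P i).eval (β j r)
  have hM : ∀ i j, M i j = 0 ↔ ∃ r, β j r ∈ A i := fun i j => by
    simp [M, prod_eq_zero_iff, hP]
  have hlower : M.IsLowerTriangular := fun i j (hij : i < j) => by
    obtain ⟨v, hv⟩ := hskew i j hij
    rw [mem_inter] at hv
    obtain ⟨r, rfl⟩ := hBβ j hv.2
    exact (hM i j).2 ⟨r, hv.1⟩
  have hdiag : ∀ i, M.diag i ≠ 0 := fun i hi => by
    obtain ⟨r, hr⟩ := (hM i i).1 hi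
    rcases hβB i ⟨r, rfl⟩ with hz' | hB'
    · exact hz (mem_biUnion.2 ⟨i, mem_univ i, hz' ▸ hr⟩)
    · exact disjoint_left.1 (hAB i) hr hB'
  have hdeg : ∀ i, (P i).natDegree ≤ a := fun i => by
    simpa [P, natDegree_prod_of_monic, monic_X_sub_C] using hA i
  have hrank := M.rank_mul_eq_right_of_isLowerTriangular (1 : Matrix (Fin m) (Fin m) K)
    hlower hdiag
  rw [Matrix.mul_one, Matrix.rank_one, Fintype.card_fin] at hrank
  exact hrank ▸ Matrix.rank_prod_eval_le P hdeg β

theorem skew_bollobas {α : Type*} [DecidableEq α] {m a b : ℕ}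
    (A B : Fin m → Finset α) (hA : ∀ i, #(A i) ≤ a) (hB : ∀ i, #(B i) ≤ b)
    (hAB : ∀ i, Disjoint (A i) (B i)) (hskew : ∀ i j, i < j → (A i ∩ B j).Nonempty) :
    m ≤ (a + b).choose b := by
  let T : Finset α := univ.biUnion A ∪ univ.biUnion B
  obtain ⟨f, -, hf⟩ := T.finite_toSet.exists_injOn_of_encard_le (t := (Set.univ : Set ℝ))
    (by simp)
  have hAT : ∀ i, A i ⊆ T := fun i =>
    subset_union_left.trans' (subset_biUnion_of_mem A (mem_univ i))
  have hBT : ∀ i, B i ⊆ T := fun i =>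
    subset_union_right.trans' (subset_biUnion_of_mem B (mem_univ i))
  refine skew_bollobas_of_infinite (fun i => (A i).image f) (fun i => (B i).image f)
    (fun i => card_image_le.trans (hA i)) (fun i => card_image_le.trans (hB i)) (fun i => ?_)
    (fun i j hij => ((hskew i j hij).image f).mono (image_inter_subset f _ _))
  rw [disjoint_iff_inter_eq_empty, ← image_inter_of_injOn _ _
    (hf.mono (Set.union_subset (coe_subset.2 (hAT i)) (coe_subset.2 (hBT i)))),
    disjoint_iff_inter_eq_empty.1 (hAB i), image_empty]

theorem Finset.exists_hitting_set_unique {ι α : Type*} [DecidableEq α] (J : Finset ι)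
    (F : ι → Finset α) (hF : ∀ j ∈ J, (F j).Nonempty) :
    ∃ W : Finset α, (∀ j ∈ J, (W ∩ F j).Nonempty) ∧
      ∀ w ∈ W, ∃ j ∈ J, ∀ x ∈ W, x ∈ F j ↔ x = w := by
  let Hits : Finset α → Prop := fun W => ∀ j ∈ J, (W ∩ F j).Nonempty
  have hU : Hits (J.biUnion F) := fun j hj => by
    obtain ⟨x, hx⟩ := hF j hj
    exact ⟨x, mem_inter.2 ⟨mem_biUnion.2 ⟨j, hj, hx⟩, hx⟩⟩
  obtain ⟨W, -, hmin⟩ := exists_minimal_le_of_wellFoundedLT Hits _ hU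
  refine ⟨W, hmin.prop, fun w hw => ?_⟩
  by_contra! hnot
  refine hmin.not_prop_of_lt (erase_ssubset hw) fun j hj => ?_
  obtain ⟨x, hx⟩ := hmin.prop j hj
  obtain ⟨hxW, hxF⟩ := mem_inter.1 hx
  by_cases hxw : x = w
  · obtain ⟨y, hyW, ⟨hyF, hyw⟩ | ⟨hyF, rfl⟩⟩ := hnot j hj
    · exact ⟨y, mem_inter.2 ⟨mem_erase.2 ⟨hyw, hyW⟩, hyF⟩⟩
    · exact absurd (hxw ▸ hxF) hyF
  · exact ⟨x, mem_inter.2 ⟨mem_erase.2 ⟨hxw, hxW⟩, hxF⟩⟩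

theorem foundIn_singletonMatrix_of_mem_iff {α : Type*} {n : ℕ} {𝓗 : Set (Set α)}
    {H₀ : Set α} (h₀ : H₀ ∈ 𝓗) (H : Fin n → Set α) (hH : ∀ t, H t ∈ 𝓗) (e : Fin n → α)
    (he₀ : ∀ t, e t ∉ H₀) (he : ∀ s t, e t ∈ H s ↔ s = t) :
    FoundIn (singletonMatrix n) 𝓗 := by
  have hmem : ∀ t, e t ∈ H t := fun t => (he t t).2 rfl
  refine ⟨Fin.cons H₀ H, e, Fin.cons_injective_iff.2 ⟨?_, fun s t hst => ?_⟩,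
    fun s t hst => ?_, Fin.cases h₀ hH, fun t => ⟨H t, hH t, hmem t⟩, fun i t => ?_⟩
  · rintro ⟨t, ht⟩
    exact he₀ t (ht ▸ hmem t)
  · exact (he s t).1 (hst ▸ hmem t)
  · exact (he s t).1 (hst ▸ hmem s)
  · induction i using Fin.cases with
    | zero => simp [singletonMatrix, he₀]
    | succ s => simp [singletonMatrix, he, Fin.val_inj]

theorem foundIn_singletonMatrix_of_unique_mem_sdiff {α : Type*} {n : ℕ} {𝓗 : Set (Set α)}
    {H₀ : Set α} (h₀ : H₀ ∈ 𝓗) (W : Finset α) (hW : n ≤ #W)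
    (hunique : ∀ w ∈ W, ∃ H ∈ 𝓗, ∀ x ∈ W, x ∈ H \ H₀ ↔ x = w) :
    FoundIn (singletonMatrix n) 𝓗 := by
  choose H hH hHW using hunique
  let e : Fin n → α := fun t => W.equivFin.symm (Fin.castLE hW t)
  have heW : ∀ t, e t ∈ W := fun t => Subtype.prop _
  have he : Function.Injective e := fun s t hst => by simpa [e] using hst
  have he₀ : ∀ t, e t ∉ H₀ := fun t => ((hHW _ (heW t) _ (heW t)).2 rfl).2
  refine foundIn_singletonMatrix_of_mem_iff h₀ (fun t => H (e t) (heW t)) (fun t => hH _ (heW t))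
    e he₀
    fun s t => ⟨fun hts => (he ((hHW _ (heW s) _ (heW t)).1 ⟨hts, he₀ t⟩)).symm, ?_⟩
  rintro rfl
  exact ((hHW _ (heW s) _ (heW s)).2 rfl).1

theorem foundIn_singletonMatrix_of_monotone_card {α : Type*} [DecidableEq α] {k l m : ℕ}
    {𝓗 : Set (Set α)} (G : Fin m → Finset α) (hG : Function.Injective G)
    (hmono : Monotone fun i => #(G i)) (hl : ∀ i, #(G i) ≤ l)
    (h𝓗 : ∀ i, (↑(G i) : Set α) ∈ 𝓗)
    (hm : (k + l).choose l < m) : FoundIn (singletonMatrix (k + 1)) 𝓗 := by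
  by_contra hS
  have hdiff : ∀ i j, i < j → (G j \ G i).Nonempty := fun i j hij =>
    sdiff_nonempty.2 fun hsub => hij.ne' (hG (eq_of_subset_of_card_le hsub (hmono hij.le)))
  choose W hWhit hWunique using fun i => (Ioi i).exists_hitting_set_unique (fun j => G j \ G i)
    fun j hj => hdiff i j (mem_Ioi.1 hj)
  have hWk : ∀ i, #(W i) ≤ k := fun i => by
    by_contra! hk
    refine hS (foundIn_singletonMatrix_of_unique_mem_sdiff (h𝓗 i) (W i) hk fun w hw => ?_)
    obtain ⟨j, -, hj⟩ := hWunique i w hw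
    exact ⟨G j, h𝓗 j, by simpa using hj⟩
  have hWG : ∀ i, Disjoint (W i) (G i) := fun i => disjoint_left.2 fun x hx => by
    obtain ⟨j, -, hj⟩ := hWunique i x hx
    exact (mem_sdiff.1 ((hj x hx).2 rfl)).2
  have := skew_bollobas W G hWk hl hWG fun i j hij =>
    (hWhit i j (mem_Ioi.2 hij)).mono (inter_subset_inter_left sdiff_subset)
  omega

/-- **Theorem (Füredi–Tuza).** In any collection of more than `(k+l).choose l`
pairwise distinct finite sets, each of cardinality at most `l`, the
`(k+1)`-singleton matrix can be found. -/
theorem furedi_tuza {α : Type*} (k l m : ℕ) (H : Fin m → Set α)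
    (hinj : Function.Injective H) (hfin : ∀ i, (H i).Finite)
    (hcard : ∀ i, (H i).ncard ≤ l) (hm : m > (k + l).choose l) :
    FoundIn (singletonMatrix (k + 1)) (Set.range H) := by
  classical
  let f : Fin m → ℕ := fun i => #(hfin i).toFinset
  let σ := Tuple.sort f
  refine foundIn_singletonMatrix_of_monotone_card (fun i => (hfin (σ i)).toFinset)
    (fun i j h => σ.injective (hinj (by simpa using h))) (Tuple.monotone_sort f)
    (fun i => (Set.ncard_eq_toFinset_card _ (hfin _)).symm.trans_le (hcard _))
    (fun i => ⟨σ i, by simp⟩) hm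
end

section
/- Let k and l be natural numbers, let A₁, A₂, …, A_m be finite sets each of cardinality at most l, and let B₁, B₂, …, B_m be finite sets each of cardinality at most k, such that A_i ∩ B_i = ∅ for every i, and A_i ∩ B_j ≠ ∅ for all i > j. Then m ≤ (k+l choose l). -/
/-!
Put the points of the ground set on the moment curve `x ↦ (1, x, …, x^(l+k-1))` in `K^(l+k)`,
so that any `l + k` distinct points give linearly independent vectors (Vandermonde). Let
`ω_j ∈ ⋀^k K^(l+k)` be the wedge of the vectors of `B_j`, and let `φ_i` be the linear form on
`⋀^k` induced by `w ↦ det(vectors of A_i, w)`. Then `φ_i ω_j = 0` when `A_i` meets `B_j`, in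
particular when `j < i`, while `φ_i ω_i ≠ 0` because `A_i ∪ B_i` consists of `l + k` distinct
points. This triangularity makes the `ω_j` linearly independent in a space of dimension
`(l+k choose k)`. Smaller sets are first padded with fresh points to sizes exactly `l` and `k`.
-/

open Finset Function

theorem Fin.append_update_right {γ : Type*} {l k : ℕ} [DecidableEq (Fin k)] (u : Fin l → γ)
    (w : Fin k → γ) (q : Fin k) (x : γ) :
    Fin.append u (update w q x) = update (Fin.append u w) (Fin.natAdd l q) x := by
  funext s
  cases s using Fin.addCases <;> simp [update_apply, Fin.ext_iff]; omega

theorem Finset.disjSum_inter_disjSum {α β : Type*} [DecidableEq α] [DecidableEq β]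
    (s₁ s₂ : Finset α) (t₁ t₂ : Finset β) :
    s₁.disjSum t₁ ∩ s₂.disjSum t₂ = (s₁ ∩ s₂).disjSum (t₁ ∩ t₂) := by
  ext (a | b) <;> simp

namespace Matrix

variable {R : Type*} [CommRing R] {l k : ℕ}

def detAppendRows (u : Fin l → Fin (l + k) → R) :
    (Fin (l + k) → R) [⋀^Fin k]→ₗ[R] R where
  toFun w := (of (Fin.append u w)).det
  map_update_add' w q x y := by
    rw [Fin.append_update_right, Fin.append_update_right, Fin.append_update_right]
    exact det_updateRow_add _ _ x y
  map_update_smul' w q c x := by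
    rw [Fin.append_update_right, Fin.append_update_right]
    exact det_updateRow_smul _ _ c x
  map_eq_zero_of_eq' w q₁ q₂ h hne :=
    det_zero_of_row_eq (i := Fin.natAdd l q₁) (j := Fin.natAdd l q₂)
      (by simpa [Fin.ext_iff] using hne)
      (show Fin.append u w _ = Fin.append u w _ by rw [Fin.append_right, Fin.append_right, h])

@[simp]
theorem detAppendRows_apply (u : Fin l → Fin (l + k) → R) (w : Fin k → Fin (l + k) → R) :
    detAppendRows u w = (of (Fin.append u w)).det :=
  rfl

theorem of_append_pow_eq_vandermonde (a : Fin l → R) (b : Fin k → R) :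
    of (Fin.append (fun p (j : Fin (l + k)) => a p ^ (j : ℕ)) fun q j => b q ^ (j : ℕ)) =
      vandermonde (Fin.append a b) := by
  ext s j
  cases s using Fin.addCases <;> simp

end Matrix

theorem linearIndependent_of_triangular {ι R V : Type*} [Fintype ι] [LinearOrder ι] [CommRing R]
    [NoZeroDivisors R] [AddCommGroup V] [Module R V] (v : ι → V) (φ : ι → V →ₗ[R] R)
    (hlt : ∀ i j, j < i → φ i (v j) = 0) (hdiag : ∀ i, φ i (v i) ≠ 0) :
    LinearIndependent R v := by
  rw [Fintype.linearIndependent_iff]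
  intro c hc i
  induction i using WellFoundedGT.induction with
  | _ i ih =>
    have hφ : ∑ j, c j * φ i (v j) = 0 := by simpa using congrArg (φ i) hc
    rw [Finset.sum_eq_single i (fun j _ hji => ?_) (by simp)] at hφ
    · exact (mul_eq_zero.1 hφ).resolve_right (hdiag i)
    · rcases hji.lt_or_gt with hji | hij
      · rw [hlt i j hji, mul_zero]
      · rw [ih j hij, zero_mul]

theorem card_le_choose_of_injective_append {ι K : Type*} [Fintype ι] [LinearOrder ι] [Field K]
    {l k : ℕ} (a : ι → Fin l → K) (b : ι → Fin k → K)
    (hdiag : ∀ i, Injective (Fin.append (a i) (b i)))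
    (hcross : ∀ i j, j < i → ∃ p q, a i p = b j q) :
    Fintype.card ι ≤ (l + k).choose k := by
  let moment : K → Fin (l + k) → K := fun x j => x ^ (j : ℕ)
  let wedgeB : ι → ⋀[K]^k (Fin (l + k) → K) := fun j => exteriorPower.ιMulti K k (moment ∘ b j)
  let detA : ι → ⋀[K]^k (Fin (l + k) → K) →ₗ[K] K := fun i =>
    exteriorPower.alternatingMapLinearEquiv (Matrix.detAppendRows (moment ∘ a i))
  have detA_wedgeB (i j : ι) :
      detA i (wedgeB j) = (Matrix.vandermonde (Fin.append (a i) (b j))).det := by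
    simp [detA, wedgeB, exteriorPower.alternatingMapLinearEquiv_apply_ιMulti, moment, comp_def,
      Matrix.of_append_pow_eq_vandermonde]
  have hwedge : LinearIndependent K wedgeB := by
    refine linearIndependent_of_triangular wedgeB detA (fun i j hji => ?_) fun i => ?_
    · obtain ⟨p, q, hpq⟩ := hcross i j hji
      rw [detA_wedgeB, ← not_ne_iff, Matrix.det_vandermonde_ne_zero_iff, Fin.append_injective_iff]
      exact fun h => h.2.2 p q hpq
    · rw [detA_wedgeB, Matrix.det_vandermonde_ne_zero_iff]
      exact hdiag i
  calc Fintype.card ι ≤ Module.finrank K (⋀[K]^k (Fin (l + k) → K)) :=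
        hwedge.fintype_card_le_finrank
    _ = (l + k).choose k := by rw [exteriorPower.finrank_eq, Module.finrank_fin_fun]

theorem card_le_choose_of_card_eq {ι β : Type*} [Fintype ι] [LinearOrder ι] [DecidableEq β]
    {l k : ℕ} (A B : ι → Finset β) (hA : ∀ i, #(A i) = l) (hB : ∀ i, #(B i) = k)
    (hdisj : ∀ i, Disjoint (A i) (B i)) (hcross : ∀ i j, j < i → (A i ∩ B j).Nonempty) :
    Fintype.card ι ≤ (l + k).choose k := by
  obtain ⟨t, ht⟩ : ∃ t : β → ℕ, Set.InjOn t (⋃ i, ↑(A i ∪ B i)) :=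
    Set.countable_iff_exists_injOn.1 (Set.countable_iUnion fun i => (A i ∪ B i).countable_toSet)
  have hinj (i : ι) {x y : β} (hx : x ∈ A i ∪ B i) (hy : y ∈ A i ∪ B i) (h : (t x : ℚ) = t y) :
      x = y :=
    ht (Set.mem_iUnion_of_mem i hx) (Set.mem_iUnion_of_mem i hy) (by exact_mod_cast h)
  let eA i := (A i).equivFinOfCardEq (hA i)
  let eB i := (B i).equivFinOfCardEq (hB i)
  refine card_le_choose_of_injective_append (fun i p => (t ((eA i).symm p).1 : ℚ))
    (fun i q => (t ((eB i).symm q).1 : ℚ)) (fun i => ?_) fun i j hji => ?_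
  · refine Fin.append_injective_iff.2 ⟨fun p₁ p₂ h => ?_, fun q₁ q₂ h => ?_, fun p q h => ?_⟩
    · exact (eA i).symm.injective (Subtype.ext (hinj i (by simp) (by simp) h))
    · exact (eB i).symm.injective (Subtype.ext (hinj i (by simp) (by simp) h))
    · have := hinj i (by simp) (by simp) h
      exact disjoint_left.1 (hdisj i) ((eA i).symm p).2 (this ▸ ((eB i).symm q).2)
  · obtain ⟨x, hx⟩ := hcross i j hji
    rw [mem_inter] at hx
    exact ⟨eA i ⟨x, hx.1⟩, eB j ⟨x, hx.2⟩, by simp⟩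

theorem card_le_choose_of_card_le {ι α : Type*} [Fintype ι] [LinearOrder ι] [DecidableEq α]
    {l k : ℕ} (A B : ι → Finset α) (hA : ∀ i, #(A i) ≤ l) (hB : ∀ i, #(B i) ≤ k)
    (hdisj : ∀ i, Disjoint (A i) (B i)) (hcross : ∀ i j, j < i → (A i ∩ B j).Nonempty) :
    Fintype.card ι ≤ (l + k).choose k := by
  -- The paddings of the `A`s and of the `B`s live in different copies of `ℕ`, so they never meet.
  let A' i : Finset (α ⊕ ℕ ⊕ ℕ) := (A i).disjSum ((range (l - #(A i))).disjSum ∅)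
  let B' i : Finset (α ⊕ ℕ ⊕ ℕ) := (B i).disjSum ((∅ : Finset ℕ).disjSum (range (k - #(B i))))
  have inter_eq (i j : ι) : A' i ∩ B' j = (A i ∩ B j).disjSum ∅ := by
    dsimp only [A', B']
    rw [disjSum_inter_disjSum, disjSum_inter_disjSum, inter_empty, empty_inter, empty_disjSum,
      map_empty]
  refine card_le_choose_of_card_eq A' B' (fun i => ?_) (fun i => ?_) (fun i => ?_)
    fun i j hji => ?_
  · simp only [A', card_disjSum, card_range, card_empty, add_zero]
    exact Nat.add_sub_cancel' (hA i)
  · simp only [B', card_disjSum, card_range, card_empty, zero_add]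
    exact Nat.add_sub_cancel' (hB i)
  · rw [disjoint_iff_inter_eq_empty, inter_eq, disjoint_iff_inter_eq_empty.1 (hdisj i),
      disjSum_empty, map_empty]
  · rw [inter_eq, nonempty_iff_ne_empty, Ne, disjSum_eq_empty, not_and_or]
    exact .inl (nonempty_iff_ne_empty.1 (hcross i j hji))

/-- **Theorem (Frankl; Kalai): skew Bollobás set-pair inequality.** If
`A₁, …, A_m` have cardinality at most `l`, `B₁, …, B_m` have cardinality at most
`k`, `A i ∩ B i = ∅` for all `i`, and `A i ∩ B j ≠ ∅` whenever `i > j`, then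
`m ≤ (k+l).choose l`. -/
theorem frankl_kalai {α : Type*} [DecidableEq α] (k l m : ℕ)
    (A B : Fin m → Finset α)
    (hA : ∀ i, (A i).card ≤ l) (hB : ∀ i, (B i).card ≤ k)
    (hdisj : ∀ i, A i ∩ B i = ∅)
    (hcross : ∀ i j, j < i → A i ∩ B j ≠ ∅) :
    m ≤ (k + l).choose l := by
  have h := card_le_choose_of_card_le A B hA hB
    (fun i => disjoint_iff_inter_eq_empty.2 (hdisj i))
    fun i j hji => nonempty_iff_ne_empty.2 (hcross i j hji)
  rwa [Fintype.card_fin, add_comm, Nat.choose_symm_add] at h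
end

section
/- Let 𝓗 = {H₁, H₂, …, H_m} be a reduced collection of m pairwise distinct sets. Then the union H₁ ∪ H₂ ∪ … ∪ H_m has at most m−1 elements. -/
/-!
Work in the `𝔽₂`-vector space `α → ZMod 2`. Since the `H i` are distinct, `H i \ {x} = H j \ {x}`
forces `H i ∆ H j = {x}`, so the unit vector at `x` is the difference of the indicator vectors of
`H i` and `H j`. Hence all unit vectors at points of the union lie in the vector span of the `m`
indicator vectors, which has dimension at most `m - 1`; being linearly independent, there are at
most `m - 1` of them.
-/

open Set Module
open scoped symmDiff

theorem Set.symmDiff_eq_singleton_of_diff_singleton_eq {α : Type*} {s t : Set α} {x : α}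
    (hst : s ≠ t) (h : s \ {x} = t \ {x}) : s ∆ t = {x} := by
  refine (subset_singleton_iff_eq.mp fun a ha => ?_).resolve_left (by simpa using hst)
  by_contra hax
  have : a ∈ s ↔ a ∈ t := by simpa [hax] using congrArg (a ∈ ·) h
  simp [mem_symmDiff, this] at ha

theorem CharTwo.indicator_one_sub_indicator_one {α R : Type*} [Ring R] [CharP R 2]
    (s t : Set α) : s.indicator (1 : α → R) - t.indicator 1 = (s ∆ t).indicator 1 := by
  ext a
  by_cases hs : a ∈ s <;> by_cases ht : a ∈ t <;> simp [indicator, mem_symmDiff, hs, ht]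

theorem finrank_vectorSpan_range_le_card_sub_one (k : Type*) {V P ι : Type*} [DivisionRing k]
    [AddCommGroup V] [Module k V] [AddTorsor V P] [Fintype ι] (p : ι → P) :
    finrank k (vectorSpan k (range p)) ≤ Fintype.card ι - 1 := by
  cases isEmpty_or_nonempty ι
  · simp [range_eq_empty, vectorSpan_empty]
  · have := finrank_vectorSpan_range_add_one_le k p
    omega

theorem LinearIndepOn.encard_le_finrank_of_mapsTo {K V ι : Type*} [DivisionRing K]
    [AddCommGroup V] [Module K V] {v : ι → V} {s : Set ι} (hv : LinearIndepOn K v s)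
    {W : Submodule K V} [FiniteDimensional K W] (hW : MapsTo v s W) :
    s.encard ≤ finrank K W := by
  have hw : LinearIndependent K fun i : s => (⟨v i, hW i.2⟩ : W) :=
    LinearIndependent.of_comp W.subtype hv
  simpa [← finrank_eq_rank] using (hw.linearIndepOn univ).encard_le_toENat_rank

/-- **Lemma (Kogan).** The union of a reduced collection of `m` pairwise distinct
sets has at most `m - 1` elements.  (A collection is *reduced* if for every element
`x` of the union, there are two distinct indices `i ≠ j` with
`H i \ {x} = H j \ {x}`.) -/
theorem reduced_union_card_le {α : Type*} (m : ℕ) (H : Fin m → Set α)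
    (hinj : Function.Injective H)
    (hred : ∀ x ∈ ⋃ i, H i, ∃ i j, i ≠ j ∧ H i \ {x} = H j \ {x}) :
    (⋃ i, H i).encard ≤ ((m - 1 : ℕ) : ℕ∞) := by
  classical
  let χ : Fin m → α → ZMod 2 := fun i => (H i).indicator 1
  have single_mem : MapsTo (fun x => Pi.single x (1 : ZMod 2)) (⋃ i, H i)
      (vectorSpan (ZMod 2) (range χ)) := by
    intro x hx
    obtain ⟨i, j, hij, hdiff⟩ := hred x hx
    show Pi.single x ((1 : α → ZMod 2) x) ∈ vectorSpan (ZMod 2) (range χ)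
    rw [← indicator_singleton, ← symmDiff_eq_singleton_of_diff_singleton_eq (hinj.ne hij) hdiff,
      ← CharTwo.indicator_one_sub_indicator_one]
    exact vsub_mem_vectorSpan _ (mem_range_self i) (mem_range_self j)
  calc (⋃ i, H i).encard
      ≤ finrank (ZMod 2) (vectorSpan (ZMod 2) (range χ)) :=
        ((Pi.linearIndependent_single_one α (ZMod 2)).linearIndepOn _).encard_le_finrank_of_mapsTo
          single_mem
    _ ≤ ((m - 1 : ℕ) : ℕ∞) := by
        exact_mod_cast (finrank_vectorSpan_range_le_card_sub_one (ZMod 2) χ).trans (by simp)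
end

section
/- Let 𝓗 be a reduced collection of pairwise distinct sets whose union has at least five elements. Suppose that either the 1×4 matrix (0000) or the 1×4 matrix (1111) can be found in 𝓗, i.e. there exist a set H in 𝓗 and four distinct elements e₁, e₂, e₃, e₄ of ⋃𝓗 such that H ∩ {e₁,e₂,e₃,e₄} = ∅, or {e₁,e₂,e₃,e₄} ⊆ H. Then at least one of the 3-singleton matrix S³, the 3-cosingleton matrix S̄³, and the 3-monotone matrix M³ can be found in 𝓗. -/
/-- A collection of sets is *reduced* if every element of the union is useful to
make the sets distinct: for every `x ∈ ⋃₀ 𝓗` there are two distinct sets `A ≠ B`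
of `𝓗` with `A \ {x} = B \ {x}`. -/
def Reduced {α : Type*} (𝓗 : Set (Set α)) : Prop :=
  ∀ x ∈ ⋃₀ 𝓗, ∃ A ∈ 𝓗, ∃ B ∈ 𝓗, A ≠ B ∧ A \ {x} = B \ {x}

/-!
Three points avoided by one member of a reduced family and contained in another already carry
one of the patterns: at each of the three points the flip pair given by reducedness yields a
chain directly, or a singleton trace (the flip of the empty trace), or a co-singleton trace (the
flip of the full one); three singletons give `S³`, three co-singletons `S̄³`, and a singleton
with a co-singleton a chain `M³`.

So if `H` avoids `e₀, …, e₃`, no member contains three of them, and each flip at `e k` either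
isolates `e k` or is `C ∪ {e k}` with `C` isolating another `e j`. Either three of the points
are isolated off the fourth, giving `S³`, or there are two flips `A ∪ {e b}`, `B ∪ {e d}` with
`A`, `B` isolating `e a`, `e c` and `a, b, c, d` distinct. In that case the flip at a fifth
point `y` gives, according as `y` lies in `A` and in `B`, three points avoided and contained as
above, an `S³` on `y, e b, e d` or on `e a, e b, e c`, or an `S̄³` on `y` and one point of each
of `{e a, e b}`, `{e c, e d}`. Complementing inside the union exchanges `(0000)` with `(1111)`
and `S³` with `S̄³`, and maps `M³` to itself.
-/

open Set Function

section

variable {α : Type*} {𝓗 : Set (Set α)} {u v w : α}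

def Unavoidable3 (𝓗 : Set (Set α)) : Prop :=
  FoundIn (singletonMatrix 3) 𝓗 ∨ FoundIn (cosingletonMatrix 3) 𝓗 ∨ FoundIn (monotoneMatrix 3) 𝓗

def HasRow (𝓗 : Set (Set α)) (u v w : α) (p q r : Prop) : Prop :=
  ∃ S ∈ 𝓗, (u ∈ S ↔ p) ∧ (v ∈ S ↔ q) ∧ (w ∈ S ↔ r)

theorem HasRow.swap₁₂ {p q r : Prop} : HasRow 𝓗 u v w p q r → HasRow 𝓗 v u w q p r :=
  fun ⟨S, hS, hu, hv, hw⟩ => ⟨S, hS, hv, hu, hw⟩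

theorem HasRow.swap₂₃ {p q r : Prop} : HasRow 𝓗 u v w p q r → HasRow 𝓗 u w v p r q :=
  fun ⟨S, hS, hu, hv, hw⟩ => ⟨S, hS, hu, hw, hv⟩

theorem Reduced.exists_insert_mem (hred : Reduced 𝓗) {x : α} (hx : x ∈ ⋃₀ 𝓗) :
    ∃ C ∈ 𝓗, x ∉ C ∧ insert x C ∈ 𝓗 := by
  obtain ⟨A, hA, B, hB, hAB, hdiff⟩ := hred x hx
  by_cases hxA : x ∈ A <;> by_cases hxB : x ∈ B
  · exact absurd (by rw [← insert_sdiff_self_of_mem hxA, hdiff, insert_sdiff_self_of_mem hxB]) hAB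
  · exact ⟨B, hB, hxB, by rwa [← insert_sdiff_singleton, ← hdiff, insert_sdiff_self_of_mem hxA]⟩
  · exact ⟨A, hA, hxA, by rwa [← insert_sdiff_singleton, hdiff, insert_sdiff_self_of_mem hxB]⟩
  · exact absurd (by rw [← sdiff_singleton_eq_self hxA, hdiff, sdiff_singleton_eq_self hxB]) hAB

theorem foundIn_of_traces {a b : ℕ} {N : Fin a → Fin b → Prop}
    (hrow : ∀ i i', (∀ j, N i j ↔ N i' j) → i = i')
    (hcol : ∀ j j', (∀ i, N i j ↔ N i j') → j = j') (hone : ∀ j, ∃ i, N i j)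
    (x : Fin b → α) (h : ∀ i, ∃ S ∈ 𝓗, ∀ j, x j ∈ S ↔ N i j) : FoundIn N 𝓗 := by
  choose R hR hRx using h
  refine ⟨R, x, fun i i' hii' => hrow i i' fun j => ?_, fun j j' hjj' => hcol j j' fun i => ?_,
    hR, fun j => ?_, hRx⟩
  · rw [← hRx, ← hRx, hii']
  · rw [← hRx, ← hRx, hjj']
  · obtain ⟨i, hi⟩ := hone j
    exact ⟨R i, hR i, (hRx i j).mpr hi⟩

theorem foundIn_of_hasRow {N : Fin 4 → Fin 3 → Prop}
    (hrow : ∀ i i', (∀ j, N i j ↔ N i' j) → i = i')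
    (hcol : ∀ j j', (∀ i, N i j ↔ N i j') → j = j') (hone : ∀ j, ∃ i, N i j) {u v w : α}
    (h : ∀ i, HasRow 𝓗 u v w (N i 0) (N i 1) (N i 2)) : FoundIn N 𝓗 := by
  refine foundIn_of_traces hrow hcol hone ![u, v, w] fun i => ?_
  obtain ⟨S, hS, hu, hv, hw⟩ := h i
  exact ⟨S, hS, fun j => by fin_cases j <;> assumption⟩

theorem foundIn_singletonMatrix_three (h₀ : HasRow 𝓗 u v w False False False)
    (h₁ : HasRow 𝓗 u v w True False False) (h₂ : HasRow 𝓗 u v w False True False)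
    (h₃ : HasRow 𝓗 u v w False False True) : FoundIn (singletonMatrix 3) 𝓗 :=
  foundIn_of_hasRow (by unfold singletonMatrix; decide) (by unfold singletonMatrix; decide)
    (by unfold singletonMatrix; decide) fun i => by
      fin_cases i <;> simpa [singletonMatrix]

theorem foundIn_cosingletonMatrix_three (h₀ : HasRow 𝓗 u v w False True True)
    (h₁ : HasRow 𝓗 u v w True False True) (h₂ : HasRow 𝓗 u v w True True False)
    (h₃ : HasRow 𝓗 u v w True True True) : FoundIn (cosingletonMatrix 3) 𝓗 :=
  foundIn_of_hasRow (by unfold cosingletonMatrix; decide) (by unfold cosingletonMatrix; decide)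
    (by unfold cosingletonMatrix; decide) fun i => by
      fin_cases i <;> simpa [cosingletonMatrix]

theorem foundIn_monotoneMatrix_three (h₀ : HasRow 𝓗 u v w False False False)
    (h₁ : HasRow 𝓗 u v w True False False) (h₂ : HasRow 𝓗 u v w True True False)
    (h₃ : HasRow 𝓗 u v w True True True) : FoundIn (monotoneMatrix 3) 𝓗 :=
  foundIn_of_hasRow (by unfold monotoneMatrix; decide) (by unfold monotoneMatrix; decide)
    (by unfold monotoneMatrix; decide) fun i => by
      fin_cases i <;> simpa [monotoneMatrix]

theorem unavoidable3_of_chain (h₀ : HasRow 𝓗 u v w False False False)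
    (h₁ : HasRow 𝓗 u v w True False False) (h₂ : HasRow 𝓗 u v w True True False)
    (h₃ : HasRow 𝓗 u v w True True True) : Unavoidable3 𝓗 :=
  Or.inr (Or.inr (foundIn_monotoneMatrix_three h₀ h₁ h₂ h₃))

theorem unavoidable3_or_hasRow_of_flip (hred : Reduced 𝓗) (huv : u ≠ v) (huw : u ≠ w)
    (h₀ : HasRow 𝓗 u v w False False False) (h₁ : HasRow 𝓗 u v w True True True) :
    Unavoidable3 𝓗 ∨ HasRow 𝓗 u v w True False False ∨ HasRow 𝓗 u v w False True True := by
  obtain ⟨T, hT, huT, -⟩ := id h₁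
  obtain ⟨C, hC, huC, hC'⟩ := hred.exists_insert_mem ⟨T, hT, huT.mpr trivial⟩
  by_cases hv : v ∈ C <;> by_cases hw : w ∈ C
  · exact Or.inr (Or.inr ⟨C, hC, by simp [huC, hv, hw]⟩)
  · refine Or.inl (unavoidable3_of_chain h₀.swap₁₂ ⟨C, hC, ?_⟩ ⟨_, hC', ?_⟩ h₁.swap₁₂) <;>
      simp [huC, hv, hw, huv.symm, huw.symm]
  · refine Or.inl (unavoidable3_of_chain h₀.swap₂₃.swap₁₂ ⟨C, hC, ?_⟩ ⟨_, hC', ?_⟩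
      h₁.swap₂₃.swap₁₂) <;> simp [huC, hv, hw, huv.symm, huw.symm]
  · exact Or.inr (Or.inl ⟨_, hC', by simp [hv, hw, huv.symm, huw.symm]⟩)

theorem unavoidable3_of_avoid_of_contain (hred : Reduced 𝓗) (huv : u ≠ v) (huw : u ≠ w)
    (hvw : v ≠ w) (h₀ : HasRow 𝓗 u v w False False False)
    (h₁ : HasRow 𝓗 u v w True True True) : Unavoidable3 𝓗 := by
  have hu := unavoidable3_or_hasRow_of_flip hred huv huw h₀ h₁
  have hv : Unavoidable3 𝓗 ∨ HasRow 𝓗 u v w False True False ∨ HasRow 𝓗 u v w True False True :=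
    (unavoidable3_or_hasRow_of_flip hred huv.symm hvw h₀.swap₁₂ h₁.swap₁₂).imp_right
      (Or.imp HasRow.swap₁₂ HasRow.swap₁₂)
  have hw : Unavoidable3 𝓗 ∨ HasRow 𝓗 u v w False False True ∨ HasRow 𝓗 u v w True True False :=
    (unavoidable3_or_hasRow_of_flip hred huw.symm hvw.symm h₀.swap₂₃.swap₁₂
      h₁.swap₂₃.swap₁₂).imp_right (Or.imp (·.swap₁₂.swap₂₃) (·.swap₁₂.swap₂₃))
  rcases hu with h | su | cu
  · exact h
  · rcases hv with h | sv | cv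
    · exact h
    · rcases hw with h | sw | cw
      · exact h
      · exact Or.inl (foundIn_singletonMatrix_three h₀ su sv sw)
      · exact unavoidable3_of_chain h₀ su cw h₁
    · exact unavoidable3_of_chain h₀.swap₂₃ su.swap₂₃ cv.swap₂₃ h₁.swap₂₃
  · rcases hv with h | sv | cv
    · exact h
    · exact unavoidable3_of_chain h₀.swap₁₂.swap₂₃ sv.swap₁₂.swap₂₃ cu.swap₁₂.swap₂₃
        h₁.swap₁₂.swap₂₃
    · rcases hw with h | sw | cw
      · exact h
      · exact unavoidable3_of_chain h₀.swap₂₃.swap₁₂ sw.swap₂₃.swap₁₂ cv.swap₂₃.swap₁₂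
          h₁.swap₂₃.swap₁₂
      · exact Or.inr (Or.inl (foundIn_cosingletonMatrix_three cu cv cw h₁))

theorem FoundIn.reindex {a b a' b' : ℕ} {N : Fin a → Fin b → Prop} {M : Fin a' → Fin b' → Prop}
    (h : FoundIn N 𝓗) {σ : Fin a' → Fin a} (hσ : Injective σ) {τ : Fin b' → Fin b}
    (hτ : Injective τ) (hM : ∀ i j, M i j ↔ N (σ i) (τ j)) : FoundIn M 𝓗 := by
  obtain ⟨H, e, hH, he, hH𝓗, heU, hHe⟩ := h
  exact ⟨H ∘ σ, e ∘ τ, hH.comp hσ, he.comp hτ, fun i => hH𝓗 _, fun j => heU _,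
    fun i j => (hHe _ _).trans (hM i j).symm⟩

def complFamily (𝓗 : Set (Set α)) : Set (Set α) :=
  (⋃₀ 𝓗 \ ·) '' 𝓗

theorem sUnion_complFamily (hred : Reduced 𝓗) : ⋃₀ complFamily 𝓗 = ⋃₀ 𝓗 := by
  refine subset_antisymm (sUnion_subset ?_) fun x hx => ?_
  · rintro _ ⟨S, -, rfl⟩
    exact sdiff_subset
  · obtain ⟨C, hC, hxC, -⟩ := hred.exists_insert_mem hx
    exact ⟨_, mem_image_of_mem _ hC, hx, hxC⟩

theorem Reduced.complFamily (hred : Reduced 𝓗) : Reduced (complFamily 𝓗) := by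
  intro x hx
  rw [sUnion_complFamily hred] at hx
  obtain ⟨C, hC, hxC, hC'⟩ := hred.exists_insert_mem hx
  refine ⟨_, mem_image_of_mem _ hC, _, mem_image_of_mem _ hC', fun h => ?_, ?_⟩
  · have : x ∈ ⋃₀ 𝓗 \ insert x C := h ▸ ⟨hx, hxC⟩
    exact this.2 (mem_insert x C)
  · ext z
    by_cases hz : z = x <;> simp [hz]

theorem FoundIn.of_complFamily {a b : ℕ} {N : Fin a → Fin b → Prop}
    (h : FoundIn N (complFamily 𝓗)) : FoundIn (fun i j => ¬ N i j) 𝓗 := by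
  obtain ⟨H, e, hH, he, hH𝓗, heU, hHe⟩ := h
  choose G hG hGH using hH𝓗
  have heU' : ∀ j, e j ∈ ⋃₀ 𝓗 := fun j => by
    obtain ⟨_, ⟨S, -, rfl⟩, hS⟩ := heU j
    exact hS.1
  refine ⟨G, e, fun i i' hii' => hH ?_, he, hG, heU', fun i j => ?_⟩
  · rw [← hGH, ← hGH, hii']
  · show e j ∈ G i ↔ ¬ N i j
    rw [← hHe, ← hGH]
    simp [heU' j]

theorem FoundIn.complFamily (hred : Reduced 𝓗) {a b : ℕ} {N : Fin a → Fin b → Prop}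
    (h : FoundIn N 𝓗) : FoundIn (fun i j => ¬ N i j) (complFamily 𝓗) := by
  obtain ⟨H, e, hH, he, hH𝓗, heU, hHe⟩ := h
  refine ⟨(⋃₀ 𝓗 \ H ·), e, fun i i' (hii' : ⋃₀ 𝓗 \ H i = ⋃₀ 𝓗 \ H i') => hH ?_, he,
    fun i => mem_image_of_mem _ (hH𝓗 i), fun j => (sUnion_complFamily hred).symm ▸ heU j,
    fun i j => ?_⟩
  · rw [← sdiff_sdiff_cancel_left (subset_sUnion_of_mem (hH𝓗 i)), hii',
      sdiff_sdiff_cancel_left (subset_sUnion_of_mem (hH𝓗 i'))]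
  · simp [← hHe, heU j]

-- Complementing `S³` gives `S̄³` with its rows rotated, and complementing `M³` gives `M³` with
-- its rows and its columns reversed.
theorem Unavoidable3.of_complFamily (h : Unavoidable3 (complFamily 𝓗)) : Unavoidable3 𝓗 := by
  rcases h with h | h | h
  · refine Or.inr (Or.inl (h.of_complFamily.reindex (σ := (· + 1)) (add_left_injective 1)
      injective_id ?_))
    unfold cosingletonMatrix singletonMatrix
    decide
  · refine Or.inl (h.of_complFamily.reindex (σ := (· - 1)) sub_left_injective injective_id ?_)
    unfold cosingletonMatrix singletonMatrix
    decide
  · refine Or.inr (Or.inr (h.of_complFamily.reindex Fin.rev_injective Fin.rev_injective ?_))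
    unfold monotoneMatrix
    decide

theorem exists_mem_notMem_range {s : Set α} {n : ℕ} (hs : n < s.encard) (e : Fin n → α) :
    ∃ y ∈ s, y ∉ range e := by
  refine not_subset.mp fun h => hs.not_ge ?_
  calc s.encard ≤ (range e).encard := encard_le_encard h
    _ ≤ (univ : Set (Fin n)).encard := image_univ (f := e) ▸ encard_image_le e univ
    _ = n := by simp

theorem exists_common_target_or_two_pointers {ι : Type*} [Nonempty ι] {Q : ι → Prop}
    {P : ι → ι → Prop} (hPQ : ∀ k j, P k j → Q j) (h : ∀ k, Q k ∨ ∃ j ≠ k, P k j) :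
    (∃ a, ∀ k ≠ a, Q k ∨ P k a) ∨
      ∃ a b c d, a ≠ b ∧ a ≠ c ∧ a ≠ d ∧ b ≠ c ∧ b ≠ d ∧ c ≠ d ∧ P b a ∧ P d c := by
  by_cases hQ : ∀ k, Q k
  · exact Or.inl ⟨Classical.arbitrary ι, fun k _ => Or.inl (hQ k)⟩
  push Not at hQ
  obtain ⟨b, hb⟩ := hQ
  obtain ⟨a, hab, hba⟩ := (h b).resolve_left hb
  by_cases ha : ∀ k ≠ a, Q k ∨ P k a
  · exact Or.inl ⟨a, ha⟩
  push Not at ha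
  obtain ⟨d, hda, hd, hda'⟩ := ha
  obtain ⟨c, hcd, hdc⟩ := (h d).resolve_left hd
  refine Or.inr ⟨a, b, c, d, hab, ?_, hda.symm, ?_, ?_, hcd, hba, hdc⟩
  · rintro rfl
    exact hda' hdc
  · rintro rfl
    exact hb (hPQ _ _ hdc)
  · rintro rfl
    exact hda' hba

section

variable {ι : Type*} {e : ι → α} {y : α} {H A B C : Set α} {a b c d : ι}

theorem unavoidable3_of_singletons_of_flip (hred : Reduced 𝓗) (he : Injective e)
    (hye : ∀ k, e k ≠ y) (hH : H ∈ 𝓗) (hHe : ∀ k, e k ∉ H) (hab : a ≠ b) (hac : a ≠ c)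
    (hbc : b ≠ c) (hA : A ∈ 𝓗) (hAe : ∀ i, e i ∈ A ↔ i = a) (hyA : y ∉ A) (hB : B ∈ 𝓗)
    (hBe : ∀ i, e i ∈ B ↔ i = c) (hyB : y ∉ B) (hC : C ∈ 𝓗) (hC' : insert y C ∈ 𝓗)
    (hbC : e b ∈ C) : Unavoidable3 𝓗 := by
  have hyb := (hye b).symm
  by_cases haC : e a ∈ C
  · exact unavoidable3_of_avoid_of_contain hred (hye a).symm hyb (he.ne hab)
      ⟨B, hB, by simp [hyB, hBe, hac, hbc]⟩ ⟨_, hC', by simp [haC, hbC]⟩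
  by_cases hcC : e c ∈ C
  · exact unavoidable3_of_avoid_of_contain hred hyb (hye c).symm (he.ne hbc)
      ⟨A, hA, by simp [hyA, hAe, hab.symm, hac.symm]⟩ ⟨_, hC', by simp [hcC, hbC]⟩
  exact Or.inl (foundIn_singletonMatrix_three (u := e a) (v := e b) (w := e c)
    ⟨H, hH, by simp [hHe]⟩ ⟨A, hA, by simp [hAe, hab.symm, hac.symm]⟩
    ⟨C, hC, by simp [haC, hbC, hcC]⟩ ⟨B, hB, by simp [hBe, hac, hbc]⟩)

theorem unavoidable3_of_disjoint_flips (hred : Reduced 𝓗) (he : Injective e) (hy : y ∈ ⋃₀ 𝓗)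
    (hye : ∀ k, e k ≠ y) (hH : H ∈ 𝓗) (hHe : ∀ k, e k ∉ H) (hab : a ≠ b) (hac : a ≠ c)
    (had : a ≠ d) (hbc : b ≠ c) (hbd : b ≠ d) (hcd : c ≠ d) (hA : A ∈ 𝓗)
    (hA' : insert (e b) A ∈ 𝓗) (hAe : ∀ i, e i ∈ A ↔ i = a) (hB : B ∈ 𝓗)
    (hB' : insert (e d) B ∈ 𝓗) (hBe : ∀ i, e i ∈ B ↔ i = c) : Unavoidable3 𝓗 := by
  obtain ⟨C, hC, hyC, hC'⟩ := hred.exists_insert_mem hy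
  have hey : ∀ k, y ≠ e k := fun k => (hye k).symm
  by_cases hyA : y ∈ A <;> by_cases hyB : y ∈ B
  · by_cases hab' : e a ∉ C ∧ e b ∉ C
    · exact unavoidable3_of_avoid_of_contain hred (he.ne hab) (hye a) (hye b)
        ⟨C, hC, by simp [hab', hyC]⟩ ⟨_, hA', by simp [hAe, hyA]⟩
    by_cases hcd' : e c ∉ C ∧ e d ∉ C
    · exact unavoidable3_of_avoid_of_contain hred (he.ne hcd) (hye c) (hye d)
        ⟨C, hC, by simp [hcd', hyC]⟩ ⟨_, hB', by simp [hBe, hyB]⟩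
    obtain ⟨p, hp, hpC⟩ : ∃ p, (p = a ∨ p = b) ∧ e p ∈ C := by
      by_contra! h
      exact hab' ⟨h a (Or.inl rfl), h b (Or.inr rfl)⟩
    obtain ⟨q, hq, hqC⟩ : ∃ q, (q = c ∨ q = d) ∧ e q ∈ C := by
      by_contra! h
      exact hcd' ⟨h c (Or.inl rfl), h d (Or.inr rfl)⟩
    obtain ⟨M, hM, hyM, hMe⟩ : ∃ M ∈ 𝓗, y ∈ M ∧ ∀ i, e i ∈ M ↔ i = a ∨ i = p := by
      rcases hp with rfl | rfl
      · exact ⟨A, hA, hyA, by simp [hAe]⟩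
      · exact ⟨_, hA', mem_insert_of_mem _ hyA, fun i => by simp [hAe, he.eq_iff, or_comm]⟩
    obtain ⟨N, hN, hyN, hNe⟩ : ∃ N ∈ 𝓗, y ∈ N ∧ ∀ i, e i ∈ N ↔ i = c ∨ i = q := by
      rcases hq with rfl | rfl
      · exact ⟨B, hB, hyB, by simp [hBe]⟩
      · exact ⟨_, hB', mem_insert_of_mem _ hyB, fun i => by simp [hBe, he.eq_iff, or_comm]⟩
    have hqM : e q ∉ M := by
      rcases hp with rfl | rfl <;> rcases hq with rfl | rfl <;>
        simp [hMe, hac.symm, had.symm, hbc.symm, hbd.symm]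
    have hpN : e p ∉ N := by
      rcases hp with rfl | rfl <;> rcases hq with rfl | rfl <;> simp [hNe, hac, had, hbc, hbd]
    exact Or.inr (Or.inl (foundIn_cosingletonMatrix_three (u := y) (v := e p) (w := e q)
      ⟨C, hC, by simp [hyC, hpC, hqC]⟩ ⟨N, hN, by simp [hyN, hpN, hNe]⟩
      ⟨M, hM, by simp [hyM, hqM, hMe]⟩ ⟨_, hC', by simp [hpC, hqC]⟩))
  · exact unavoidable3_of_avoid_of_contain hred (he.ne hab) (hye a) (hye b)
      ⟨B, hB, by simp [hyB, hBe, hac, hbc]⟩ ⟨_, hA', by simp [hAe, hyA, hey b]⟩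
  · exact unavoidable3_of_avoid_of_contain hred (he.ne hcd) (hye c) (hye d)
      ⟨A, hA, by simp [hyA, hAe, hac.symm, had.symm]⟩ ⟨_, hB', by simp [hBe, hyB, hey d]⟩
  · by_cases hbC : e b ∈ C
    · exact unavoidable3_of_singletons_of_flip hred he hye hH hHe hab hac hbc hA hAe hyA hB hBe hyB
        hC hC' hbC
    by_cases hdC : e d ∈ C
    · exact unavoidable3_of_singletons_of_flip hred he hye hH hHe hcd hac.symm had.symm hB hBe
        hyB hA hAe hyA hC hC' hdC
    exact Or.inl (foundIn_singletonMatrix_three (u := y) (v := e b) (w := e d)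
      ⟨C, hC, by simp [hyC, hbC, hdC]⟩ ⟨_, hC', by simp [hbC, hdC, hye]⟩
      ⟨_, hA', by simp [hey, hyA, hAe, he.eq_iff, hbd.symm, had.symm]⟩
      ⟨_, hB', by simp [hey, hyB, hBe, he.eq_iff, hbd, hbc, hcd.symm]⟩)

end

theorem unavoidable3_of_avoid_four (hred : Reduced 𝓗) {e : Fin 4 → α} (he : Injective e)
    (heU : ∀ k, e k ∈ ⋃₀ 𝓗) {y : α} (hy : y ∈ ⋃₀ 𝓗) (hye : ∀ k, e k ≠ y) {H : Set α}
    (hH : H ∈ 𝓗) (hHe : ∀ k, e k ∉ H) : Unavoidable3 𝓗 := by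
  by_contra hno
  choose C hC heC hC' using fun k => hred.exists_insert_mem (heU k)
  have hpoint : ∀ k, (∃ S ∈ 𝓗, ∀ i, e i ∈ S ↔ i = k) ∨ ∃ j ≠ k, ∀ i, e i ∈ C k ↔ i = j := by
    intro k
    by_cases hCk : ∃ j, e j ∈ C k
    · obtain ⟨j, hj⟩ := hCk
      have hjk : j ≠ k := fun h => heC k (h ▸ hj)
      refine Or.inr ⟨j, hjk, fun i => ⟨fun hi => ?_, fun hij => hij ▸ hj⟩⟩
      by_contra hij
      have hik : i ≠ k := fun h => heC k (h ▸ hi)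
      exact hno (unavoidable3_of_avoid_of_contain hred (he.ne hjk.symm) (he.ne hik.symm)
        (he.ne (Ne.symm hij)) ⟨H, hH, by simp [hHe]⟩ ⟨_, hC' k, by simp [hj, hi]⟩)
    · push Not at hCk
      exact Or.inl ⟨_, hC' k, fun i => by simp [hCk, he.eq_iff]⟩
  rcases exists_common_target_or_two_pointers (fun k j hkj => ⟨C k, hC k, hkj⟩) hpoint with
    ⟨a, ha⟩ | ⟨a, b, c, d, hab, hac, had, hbc, hbd, hcd, hba, hdc⟩
  · have hM : ∀ k ≠ a, ∃ M ∈ 𝓗, ∀ i ≠ a, e i ∈ M ↔ i = k := by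
      intro k hka
      rcases ha k hka with ⟨S, hS, hSe⟩ | hka'
      · exact ⟨S, hS, fun i _ => hSe i⟩
      · exact ⟨_, hC' k, fun i hia => by simp [hka', he.eq_iff, hia]⟩
    obtain ⟨i, j, l, hij, hil, hjl, hia, hja, hla⟩ := (by decide : ∀ a : Fin 4,
      ∃ i j l : Fin 4, i ≠ j ∧ i ≠ l ∧ j ≠ l ∧ i ≠ a ∧ j ≠ a ∧ l ≠ a) a
    obtain ⟨Mi, hMi, hMie⟩ := hM i hia
    obtain ⟨Mj, hMj, hMje⟩ := hM j hja
    obtain ⟨Ml, hMl, hMle⟩ := hM l hla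
    exact hno (Or.inl (foundIn_singletonMatrix_three (u := e i) (v := e j) (w := e l)
      ⟨H, hH, by simp [hHe]⟩ ⟨Mi, hMi, by simp [hMie, hia, hja, hla, hij.symm, hil.symm]⟩
      ⟨Mj, hMj, by simp [hMje, hia, hja, hla, hij, hjl.symm]⟩
      ⟨Ml, hMl, by simp [hMle, hia, hja, hla, hil, hjl]⟩))
  · exact hno (unavoidable3_of_disjoint_flips hred he hy hye hH hHe hab hac had hbc hbd hcd (hC b)
      (hC' b) hba (hC d) (hC' d) hdc)

theorem unavoidable3_of_foundIn_zeros (hred : Reduced 𝓗) (hbig : 5 ≤ (⋃₀ 𝓗).encard)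
    (h : FoundIn (fun (_ : Fin 1) (_ : Fin 4) => False) 𝓗) : Unavoidable3 𝓗 := by
  obtain ⟨H, e, -, he, hH, heU, hHe⟩ := h
  obtain ⟨y, hy, hye⟩ := exists_mem_notMem_range (lt_of_lt_of_le (by norm_num) hbig) e
  exact unavoidable3_of_avoid_four hred he heU hy (fun k hk => hye ⟨k, hk⟩) (hH 0)
    fun k hk => (hHe 0 k).mp hk

end

/-- **Lemma.** If `𝓗` is reduced, its union has at least five elements, and the
`1 × 4` matrix `(0000)` or the `1 × 4` matrix `(1111)` can be found in `𝓗`, then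
one of `S³`, `S̄³`, `M³` can be found in `𝓗`. -/
theorem reduced_0000_or_1111 {α : Type*} (𝓗 : Set (Set α)) (hred : Reduced 𝓗)
    (hbig : 5 ≤ (⋃₀ 𝓗).encard)
    (h : FoundIn (fun (_ : Fin 1) (_ : Fin 4) => False) 𝓗 ∨
         FoundIn (fun (_ : Fin 1) (_ : Fin 4) => True) 𝓗) :
    FoundIn (singletonMatrix 3) 𝓗 ∨ FoundIn (cosingletonMatrix 3) 𝓗 ∨
    FoundIn (monotoneMatrix 3) 𝓗 := by
  rcases h with h₀ | h₁
  · exact unavoidable3_of_foundIn_zeros hred hbig h₀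
  · refine (unavoidable3_of_foundIn_zeros hred.complFamily ((sUnion_complFamily hred).symm ▸ hbig)
      ?_).of_complFamily
    simpa using h₁.complFamily hred
end
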